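/- Let c solve the area preserving curve shortening flow with Neumann free boundary on convex Σ. Then for t > 0, d/dt ∫(κ-κ̄)² ds = 2[(κ-κ̄)∂ₛκ]ₐᵇ - 2∫(∂ₛκ)² ds + ∫(κ-κ̄)⁴ ds + 3κ̄∫(κ-κ̄)³ ds + 2κ̄²∫(κ-κ̄)² ds, and the boundary term 2[(κ-κ̄)∂ₛκ]ₐᵇ = -2(κ(b)-κ̄)²·Σκ(c(b)) - 2(κ(a)-κ̄)²·Σκ(c(a)) is nonpositive since Σκ ≥ 0. Consequently, if moreover |κ̄| ≤ c₂ uniformly, there exist constants C₁, C₂, C₃ depending only on c₂ and L₀ with d/dt ∫(κ-κ̄)² ds ≤ C₁(∫(κ-κ̄)²ds)³ + C₂(∫(κ-κ̄)²ds)^{5/3} + C₃ ∫(κ-κ̄)² ds. -/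

import Mathlib

open Complex MeasureTheory Set Filter

/-- Spatial derivative `∂ₚ` of a one-parameter family of plane curves (the plane is `ℂ ≅ ℝ²`). -/
noncomputable def pderiv (c : ℝ → ℝ → ℂ) (p t : ℝ) : ℂ := deriv (fun q => c q t) p

/-- The real (Euclidean) inner product on the plane `ℂ ≅ ℝ²`. -/
noncomputable def rinner (x y : ℂ) : ℝ := x.re * y.re + x.im * y.im

/-- Arclength derivative `∂ₛ = |∂ₚc|⁻¹ ∂ₚ` of a scalar quantity along a family of curves. -/
noncomputable def sderivS (c : ℝ → ℝ → ℂ) (f : ℝ → ℝ → ℝ) (p t : ℝ) : ℝ :=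
  ‖pderiv c p t‖⁻¹ * deriv (fun q => f q t) p

/-- Arclength derivative of a vector quantity along a family of curves. -/
noncomputable def sderivV (c : ℝ → ℝ → ℂ) (f : ℝ → ℝ → ℂ) (p t : ℝ) : ℂ :=
  (‖pderiv c p t‖⁻¹ : ℝ) • deriv (fun q => f q t) p

/-- A solution `c : [pa,pb] × [0,T) → ℝ²` of the area preserving curve shortening flow
`∂ₜ c = (κ - κ̄) ν`, with unit tangent `tang = ∂ₛ c`, unit normal `nor = J tang`
(rotation by `+π/2`, i.e. multiplication by `I`), curvature `curv` (via the Frenet equation),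
length `len` and average curvature `curvAvg = (∫ κ ds)/len`. -/
structure APCSF where
  pa : ℝ
  pb : ℝ
  T : ℝ
  c : ℝ → ℝ → ℂ
  curv : ℝ → ℝ → ℝ
  tang : ℝ → ℝ → ℂ
  nor : ℝ → ℝ → ℂ
  curvAvg : ℝ → ℝ
  len : ℝ → ℝ
  hab : pa < pb
  hT : 0 < T
  hsmooth : ContDiff ℝ (⊤ : ℕ∞) (Function.uncurry c)
  hreg : ∀ p t, pderiv c p t ≠ 0
  htang : ∀ p t, tang p t = (‖pderiv c p t‖⁻¹ : ℝ) • pderiv c p t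
  hnor : ∀ p t, nor p t = Complex.I * tang p t
  hfrenet : ∀ p t, deriv (fun q => tang q t) p = (curv p t * ‖pderiv c p t‖) • nor p t
  hlen : ∀ t, len t = ∫ p in pa..pb, ‖pderiv c p t‖
  hcurvAvg : ∀ t, curvAvg t * len t = ∫ p in pa..pb, curv p t * ‖pderiv c p t‖
  hflow : ∀ p t, t ∈ Set.Ico 0 T →
    HasDerivAt (fun s => c p s) ((curv p t - curvAvg t) • nor p t) t

/-- A global-in-time (`T = ∞`) solution of the area preserving curve shortening flow. -/
structure APCSFinf where
  pa : ℝ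
  pb : ℝ
  c : ℝ → ℝ → ℂ
  curv : ℝ → ℝ → ℝ
  tang : ℝ → ℝ → ℂ
  nor : ℝ → ℝ → ℂ
  curvAvg : ℝ → ℝ
  len : ℝ → ℝ
  hab : pa < pb
  hsmooth : ContDiff ℝ (⊤ : ℕ∞) (Function.uncurry c)
  hreg : ∀ p t, pderiv c p t ≠ 0
  htang : ∀ p t, tang p t = (‖pderiv c p t‖⁻¹ : ℝ) • pderiv c p t
  hnor : ∀ p t, nor p t = Complex.I * tang p t
  hfrenet : ∀ p t, deriv (fun q => tang q t) p = (curv p t * ‖pderiv c p t‖) • nor p t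
  hlen : ∀ t, len t = ∫ p in pa..pb, ‖pderiv c p t‖
  hcurvAvg : ∀ t, curvAvg t * len t = ∫ p in pa..pb, curv p t * ‖pderiv c p t‖
  hflow : ∀ p t, 0 ≤ t →
    HasDerivAt (fun s => c p s) ((curv p t - curvAvg t) • nor p t) t

/-- A smooth convex closed support curve `Σ`, parametrized by arclength with period `per`,
with curvature `sk ≥ 0`. -/
structure SupportCurve where
  sf : ℝ → ℂ
  per : ℝ
  sk : ℝ → ℝ
  hper : 0 < per
  hperiodic : Function.Periodic sf per
  hsmooth : ContDiff ℝ (⊤ : ℕ∞) sf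
  harclength : ∀ u, ‖deriv sf u‖ = 1
  hsk : ∀ u, deriv (deriv sf) u = sk u • (Complex.I * deriv sf u)
  hconvex : ∀ u, 0 ≤ sk u
  hinj : Set.InjOn sf (Set.Ico 0 per)

/-- `Σd`: the minimal distance between points of `Σ` with antiparallel tangents. -/
noncomputable def SupportCurve.antipodalDist (S : SupportCurve) : ℝ :=
  sInf {r : ℝ | ∃ u v : ℝ, deriv S.sf u = -deriv S.sf v ∧ r = ‖S.sf u - S.sf v‖}

/-- Neumann free boundary conditions (outer case): the endpoints move on `Σ` and the curve
meets `Σ` orthogonally, `τ(a,t) = -Σν⃗(c(a,t))` and `τ(b,t) = Σν⃗(c(b,t))`,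
where `Σν⃗ = I · Στ⃗` is the normal of the support curve. -/
def APCSF.NeumannBC (F : APCSF) (S : SupportCurve) : Prop :=
  (∀ t ∈ Set.Ico (0:ℝ) F.T, F.c F.pa t ∈ Set.range S.sf ∧ F.c F.pb t ∈ Set.range S.sf) ∧
  (∀ t ∈ Set.Ico (0:ℝ) F.T, ∀ u, S.sf u = F.c F.pa t →
      F.tang F.pa t = -(Complex.I * deriv S.sf u)) ∧
  (∀ t ∈ Set.Ico (0:ℝ) F.T, ∀ u, S.sf u = F.c F.pb t →
      F.tang F.pb t = Complex.I * deriv S.sf u)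


section TwoVar
variable {E : Type*} [NormedAddCommGroup E] [NormedSpace ℝ E]

/-- partial derivative in the first variable -/
noncomputable def pd (h : ℝ → ℝ → E) (p t : ℝ) : E := deriv (fun q => h q t) p
/-- partial derivative in the second variable -/
noncomputable def td (h : ℝ → ℝ → E) (p t : ℝ) : E := deriv (fun s => h p s) t

variable {h : ℝ → ℝ → E}

lemma hasDerivAt_pd_fderiv (hh : ContDiff ℝ (⊤ : ℕ∞) ↿h) (p t : ℝ) :
    HasDerivAt (fun q => h q t) (fderiv ℝ ↿h (p, t) (1, 0)) p := by
  have h1 : HasDerivAt (fun q : ℝ => (q, t)) ((1 : ℝ), (0 : ℝ)) p := by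
    simpa using (hasDerivAt_id p).prodMk (hasDerivAt_const p t)
  have h2 : HasFDerivAt ↿h (fderiv ℝ ↿h (p, t)) (p, t) :=
    (hh.differentiable (by simp) (p, t)).hasFDerivAt
  exact h2.comp_hasDerivAt p h1

lemma hasDerivAt_td_fderiv (hh : ContDiff ℝ (⊤ : ℕ∞) ↿h) (p t : ℝ) :
    HasDerivAt (fun s => h p s) (fderiv ℝ ↿h (p, t) (0, 1)) t := by
  have h1 : HasDerivAt (fun s : ℝ => (p, s)) ((0 : ℝ), (1 : ℝ)) t := by
    simpa using (hasDerivAt_const t p).prodMk (hasDerivAt_id t)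
  have h2 : HasFDerivAt ↿h (fderiv ℝ ↿h (p, t)) (p, t) :=
    (hh.differentiable (by simp) (p, t)).hasFDerivAt
  exact h2.comp_hasDerivAt t h1

lemma pd_eq_fderiv (hh : ContDiff ℝ (⊤ : ℕ∞) ↿h) (p t : ℝ) :
    pd h p t = fderiv ℝ ↿h (p, t) (1, 0) := (hasDerivAt_pd_fderiv hh p t).deriv

lemma td_eq_fderiv (hh : ContDiff ℝ (⊤ : ℕ∞) ↿h) (p t : ℝ) :
    td h p t = fderiv ℝ ↿h (p, t) (0, 1) := (hasDerivAt_td_fderiv hh p t).deriv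

lemma hasDerivAt_pd (hh : ContDiff ℝ (⊤ : ℕ∞) ↿h) (p t : ℝ) :
    HasDerivAt (fun q => h q t) (pd h p t) p := by
  rw [pd_eq_fderiv hh]; exact hasDerivAt_pd_fderiv hh p t

lemma hasDerivAt_td (hh : ContDiff ℝ (⊤ : ℕ∞) ↿h) (p t : ℝ) :
    HasDerivAt (fun s => h p s) (td h p t) t := by
  rw [td_eq_fderiv hh]; exact hasDerivAt_td_fderiv hh p t

lemma contDiff_pd (hh : ContDiff ℝ (⊤ : ℕ∞) ↿h) : ContDiff ℝ (⊤ : ℕ∞) ↿(pd h) := by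
  have : ↿(pd h) = fun z : ℝ × ℝ => fderiv ℝ ↿h z (1, 0) := by
    funext z
    exact pd_eq_fderiv hh z.1 z.2
  rw [this]
  exact (hh.fderiv_right (by simp)).clm_apply contDiff_const

lemma contDiff_td (hh : ContDiff ℝ (⊤ : ℕ∞) ↿h) : ContDiff ℝ (⊤ : ℕ∞) ↿(td h) := by
  have : ↿(td h) = fun z : ℝ × ℝ => fderiv ℝ ↿h z (0, 1) := by
    funext z
    exact td_eq_fderiv hh z.1 z.2
  rw [this]
  exact (hh.fderiv_right (by simp)).clm_apply contDiff_const

lemma contDiff_slice1 (hh : ContDiff ℝ (⊤ : ℕ∞) ↿h) (t : ℝ) : ContDiff ℝ (⊤ : ℕ∞) (fun q => h q t) :=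
  hh.comp (contDiff_id.prodMk contDiff_const)

lemma continuous_slice1 (hh : ContDiff ℝ (⊤ : ℕ∞) ↿h) (t : ℝ) : Continuous (fun q => h q t) :=
  (contDiff_slice1 hh t).continuous

lemma intervalIntegrable_slice1 (hh : ContDiff ℝ (⊤ : ℕ∞) ↿h) (t a b : ℝ) :
    IntervalIntegrable (fun q => h q t) volume a b :=
  (continuous_slice1 hh t).intervalIntegrable a b

/-- mixed partials commute -/
lemma td_pd_comm (hh : ContDiff ℝ (⊤ : ℕ∞) ↿h) (p t : ℝ) :
    td (pd h) p t = pd (td h) p t := by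
  have hD : ContDiff ℝ (⊤ : ℕ∞) (fderiv ℝ ↿h) := hh.fderiv_right (by simp)
  have symm : IsSymmSndFDerivAt ℝ ↿h (p, t) :=
    hh.contDiffAt.isSymmSndFDerivAt (by rw [minSmoothness_of_isRCLikeNormedField]; exact WithTop.coe_le_coe.mpr (le_top : (2:ℕ∞) ≤ ⊤))
  -- td (pd h) p t
  have e1 : td (pd h) p t = fderiv ℝ (fderiv ℝ ↿h) (p, t) (0, 1) (1, 0) := by
    have hpdf : ∀ s, pd h p s = (ContinuousLinearMap.apply ℝ E ((1:ℝ),(0:ℝ)))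
        ((fderiv ℝ ↿h) (p, s)) := by
      intro s; exact pd_eq_fderiv hh p s
    have hd : HasDerivAt (fun s => (fderiv ℝ ↿h) (p, s))
        (fderiv ℝ (fderiv ℝ ↿h) (p, t) (0, 1)) t := by
      have h1 : HasDerivAt (fun s : ℝ => (p, s)) ((0 : ℝ), (1 : ℝ)) t := by
        simpa using (hasDerivAt_const t p).prodMk (hasDerivAt_id t)
      exact ((hD.differentiable (by simp) (p, t)).hasFDerivAt).comp_hasDerivAt t h1
    have hd2 : HasDerivAt (fun s => pd h p s)
        ((ContinuousLinearMap.apply ℝ E ((1:ℝ),(0:ℝ)))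
          (fderiv ℝ (fderiv ℝ ↿h) (p, t) (0, 1))) t := by
      have := ((ContinuousLinearMap.apply ℝ E ((1:ℝ),(0:ℝ))).hasFDerivAt).comp_hasDerivAt t hd
      simpa [Function.comp_def, ← hpdf] using this
    simpa [td, pd] using hd2.deriv
  have e2 : pd (td h) p t = fderiv ℝ (fderiv ℝ ↿h) (p, t) (1, 0) (0, 1) := by
    have hpdf : ∀ q, td h q t = (ContinuousLinearMap.apply ℝ E ((0:ℝ),(1:ℝ)))
        ((fderiv ℝ ↿h) (q, t)) := by
      intro q; exact td_eq_fderiv hh q t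
    have hd : HasDerivAt (fun q => (fderiv ℝ ↿h) (q, t))
        (fderiv ℝ (fderiv ℝ ↿h) (p, t) (1, 0)) p := by
      have h1 : HasDerivAt (fun q : ℝ => (q, t)) ((1 : ℝ), (0 : ℝ)) p := by
        simpa using (hasDerivAt_id p).prodMk (hasDerivAt_const p t)
      exact ((hD.differentiable (by simp) (p, t)).hasFDerivAt).comp_hasDerivAt p h1
    have hd2 : HasDerivAt (fun q => td h q t)
        ((ContinuousLinearMap.apply ℝ E ((0:ℝ),(1:ℝ)))
          (fderiv ℝ (fderiv ℝ ↿h) (p, t) (1, 0))) p := by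
      have := ((ContinuousLinearMap.apply ℝ E ((0:ℝ),(1:ℝ))).hasFDerivAt).comp_hasDerivAt p hd
      simpa [Function.comp_def, ← hpdf] using this
    simpa [td, pd] using hd2.deriv
  rw [e1, e2, symm.eq]

end TwoVar


section RInner

lemma rinner_smul_left (a : ℝ) (z w : ℂ) : rinner (a • z) w = a * rinner z w := by
  simp [rinner, Complex.real_smul, Complex.mul_re, Complex.mul_im]; ring

lemma rinner_smul_right (a : ℝ) (z w : ℂ) : rinner z (a • w) = a * rinner z w := by
  simp [rinner, Complex.real_smul, Complex.mul_re, Complex.mul_im]; ring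

lemma rinner_self (z : ℂ) : rinner z z = ‖z‖ ^ 2 := by
  rw [rinner, ← Complex.normSq_apply, ← Complex.sq_norm]

lemma rinner_I_mul_self (z : ℂ) : rinner (Complex.I * z) z = 0 := by
  simp [rinner, Complex.mul_re, Complex.mul_im]; ring

lemma rinner_comm (z w : ℂ) : rinner z w = rinner w z := by
  simp [rinner]; ring

lemma rinner_neg_right (x w : ℂ) : rinner x (-w) = - rinner x w := by
  simp [rinner]; ring

lemma rinner_sub_left (x y w : ℂ) : rinner (x - y) w = rinner x w - rinner y w := by
  simp [rinner]; ring

lemma hasDerivAt_rinner {x y : ℝ → ℂ} {x' y' : ℂ} {t : ℝ}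
    (hx : HasDerivAt x x' t) (hy : HasDerivAt y y' t) :
    HasDerivAt (fun s => rinner (x s) (y s))
      (rinner x' (y t) + rinner (x t) y') t := by
  have hxre : HasDerivAt (fun s => (x s).re) x'.re t :=
    (Complex.reCLM.hasFDerivAt.comp_hasDerivAt t hx :)
  have hxim : HasDerivAt (fun s => (x s).im) x'.im t :=
    (Complex.imCLM.hasFDerivAt.comp_hasDerivAt t hx :)
  have hyre : HasDerivAt (fun s => (y s).re) y'.re t :=
    (Complex.reCLM.hasFDerivAt.comp_hasDerivAt t hy :)
  have hyim : HasDerivAt (fun s => (y s).im) y'.im t :=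
    (Complex.imCLM.hasFDerivAt.comp_hasDerivAt t hy :)
  have := (hxre.mul hyre).add (hxim.mul hyim)
  refine this.congr_deriv ?_
  simp only [rinner]; ring

lemma contDiff_re : ContDiff ℝ (⊤ : ℕ∞) (fun z : ℂ => z.re) := Complex.reCLM.contDiff
lemma contDiff_im : ContDiff ℝ (⊤ : ℕ∞) (fun z : ℂ => z.im) := Complex.imCLM.contDiff

lemma ContDiff.rinner2 {F : Type*} [NormedAddCommGroup F] [NormedSpace ℝ F]
    {f g : F → ℂ} (hf : ContDiff ℝ (⊤ : ℕ∞) f) (hg : ContDiff ℝ (⊤ : ℕ∞) g) :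
    ContDiff ℝ (⊤ : ℕ∞) (fun x => rinner (f x) (g x)) := by
  unfold rinner
  exact ((contDiff_re.comp hf).mul (contDiff_re.comp hg)).add
    ((contDiff_im.comp hf).mul (contDiff_im.comp hg))

/-- derivative of the norm of a nonvanishing curve -/
lemma HasDerivAt.cnorm {w : ℝ → ℂ} {w' : ℂ} {t : ℝ}
    (hw : HasDerivAt w w' t) (h0 : w t ≠ 0) :
    HasDerivAt (fun s => ‖w s‖) (rinner w' (w t) / ‖w t‖) t := by
  have h1 : HasDerivAt (fun s => rinner (w s) (w s)) (2 * rinner w' (w t)) t := by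
    have := hasDerivAt_rinner hw hw
    convert this using 1
    rw [rinner_comm (w t) w']; ring
  have hpos : 0 < rinner (w t) (w t) := by
    rw [rinner_self]
    exact pow_pos (norm_pos_iff.mpr h0) 2
  have h2 := (Real.hasDerivAt_sqrt (ne_of_gt hpos)).comp t h1
  have heq : (fun s => Real.sqrt (rinner (w s) (w s))) = fun s => ‖w s‖ := by
    funext s
    rw [rinner_self, Real.sqrt_sq (norm_nonneg _)]
  simp only [Function.comp_def] at h2
  rw [heq] at h2
  refine h2.congr_deriv ?_
  rw [rinner_self, Real.sqrt_sq (norm_nonneg _)]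
  field_simp

section Geometry
namespace APCSF
variable (F : APCSF)

lemma pd_c_eq : pd F.c = pderiv F.c := rfl

noncomputable def v (p t : ℝ) : ℝ := ‖pderiv F.c p t‖

variable {p t : ℝ}

lemma smooth_cp : ContDiff ℝ (⊤ : ℕ∞) ↿(pderiv F.c) := contDiff_pd F.hsmooth

lemma smooth_v : ContDiff ℝ (⊤ : ℕ∞) ↿F.v := by
  rw [contDiff_iff_contDiffAt]
  intro z
  have : ↿F.v = fun z : ℝ × ℝ => ‖(↿(pderiv F.c)) z‖ := rfl
  rw [this]
  exact ContDiffAt.norm ℝ (F.smooth_cp.contDiffAt) (F.hreg z.1 z.2)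

lemma v_pos : 0 < F.v p t := norm_pos_iff.mpr (F.hreg p t)
lemma v_ne : F.v p t ≠ 0 := ne_of_gt F.v_pos

lemma cp_eq : pderiv F.c p t = F.v p t • F.tang p t := by
  rw [F.htang, smul_smul]
  rw [show (‖pderiv F.c p t‖ : ℝ) = F.v p t from rfl, mul_inv_cancel₀ F.v_ne, one_smul]

lemma smooth_tang : ContDiff ℝ (⊤ : ℕ∞) ↿F.tang := by
  have : ↿F.tang = fun z : ℝ × ℝ => (F.v z.1 z.2)⁻¹ • (↿(pderiv F.c)) z := by
    funext z
    exact F.htang z.1 z.2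
  rw [this]
  exact ((F.smooth_v.inv fun z => F.v_ne).smul F.smooth_cp)

lemma norm_tang : ‖F.tang p t‖ = 1 := by
  rw [F.htang, norm_smul]
  simp only [Real.norm_eq_abs, abs_inv, abs_norm]
  rw [show (‖pderiv F.c p t‖ : ℝ) = F.v p t from rfl, inv_mul_cancel₀ F.v_ne]

lemma smooth_nor : ContDiff ℝ (⊤ : ℕ∞) ↿F.nor := by
  have : ↿F.nor = fun z : ℝ × ℝ => Complex.I * (↿F.tang) z := by
    funext z
    exact F.hnor z.1 z.2
  rw [this]
  exact contDiff_const.mul F.smooth_tang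

lemma norm_nor : ‖F.nor p t‖ = 1 := by
  rw [F.hnor]
  simp [map_mul]
  exact F.norm_tang

lemma smooth_pdtang : ContDiff ℝ (⊤ : ℕ∞) ↿(pd F.tang) := contDiff_pd F.smooth_tang

lemma pd_tang_eq : pd F.tang p t = (F.curv p t * F.v p t) • F.nor p t := F.hfrenet p t

lemma rinner_nor_tang : rinner (F.nor p t) (F.tang p t) = 0 := by
  rw [F.hnor]
  exact rinner_I_mul_self _

lemma rinner_tang_nor : rinner (F.tang p t) (F.nor p t) = 0 := by
  rw [rinner_comm]
  exact F.rinner_nor_tang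

lemma rinner_nor_nor : rinner (F.nor p t) (F.nor p t) = 1 := by
  rw [rinner_self, F.norm_nor]; norm_num

lemma rinner_tang_tang : rinner (F.tang p t) (F.tang p t) = 1 := by
  rw [rinner_self, F.norm_tang]; norm_num

lemma curv_eq : F.curv p t = rinner (pd F.tang p t) (F.nor p t) * (F.v p t)⁻¹ := by
  rw [F.pd_tang_eq, rinner_smul_left, F.rinner_nor_nor, mul_one, mul_assoc,
    mul_inv_cancel₀ F.v_ne, mul_one]

lemma smooth_curv : ContDiff ℝ (⊤ : ℕ∞) ↿F.curv := by
  have : ↿F.curv = fun z : ℝ × ℝ =>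
      rinner ((↿(pd F.tang)) z) ((↿F.nor) z) * ((↿F.v) z)⁻¹ := by
    funext z
    exact F.curv_eq
  rw [this]
  exact (ContDiff.rinner2 F.smooth_pdtang F.smooth_nor).mul (F.smooth_v.inv fun z => F.v_ne)

noncomputable def st (p t : ℝ) : ℝ := sderivS F.c F.curv p t

lemma st_eq : F.st p t = (F.v p t)⁻¹ * pd F.curv p t := rfl

lemma smooth_st : ContDiff ℝ (⊤ : ℕ∞) ↿F.st := by
  have : ↿F.st = fun z : ℝ × ℝ => (((↿F.v) z)⁻¹) * (↿(pd F.curv)) z := rfl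
  rw [this]
  exact (F.smooth_v.inv fun z => F.v_ne).mul (contDiff_pd F.smooth_curv)

lemma pd_curv_eq : pd F.curv p t = F.v p t * F.st p t := by
  rw [st_eq, ← mul_assoc, mul_inv_cancel₀ F.v_ne, one_mul]

lemma pd_nor : pd F.nor p t = -((F.curv p t * F.v p t) • F.tang p t) := by
  have h1 : HasDerivAt (fun q => F.nor q t) (Complex.I * pd F.tang p t) p := by
    have := (hasDerivAt_pd F.smooth_tang p t).const_mul Complex.I
    have he : (fun q => Complex.I * F.tang q t) = fun q => F.nor q t := by
      funext q
      rw [F.hnor]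
    rwa [he] at this
  have h2 : pd F.nor p t = Complex.I * pd F.tang p t := h1.deriv
  rw [h2, F.pd_tang_eq, F.hnor, Complex.real_smul, Complex.real_smul]
  have : Complex.I * Complex.I = -1 := Complex.I_mul_I
  push_cast
  linear_combination (↑(F.curv p t) * ↑(F.v p t) * F.tang p t : ℂ) * this

end APCSF
end Geometry

section Evolution
namespace APCSF
variable (F : APCSF) {p t : ℝ}

lemma td_c_eq (ht : t ∈ Set.Ico 0 F.T) (p : ℝ) :
    td F.c p t = (F.curv p t - F.curvAvg t) • F.nor p t := (F.hflow p t ht).deriv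

lemma td_cp (ht : t ∈ Set.Ico 0 F.T) :
    td (pderiv F.c) p t = (pd F.curv p t) • F.nor p t
      - ((F.curv p t - F.curvAvg t) * (F.curv p t * F.v p t)) • F.tang p t := by
  rw [← F.pd_c_eq, td_pd_comm F.hsmooth]
  have he : (fun q => td F.c q t) = fun q => (F.curv q t - F.curvAvg t) • F.nor q t := by
    funext q
    exact F.td_c_eq ht q
  have hd : HasDerivAt (fun q => (F.curv q t - F.curvAvg t) • F.nor q t)
      ((F.curv p t - F.curvAvg t) • pd F.nor p t + (pd F.curv p t) • F.nor p t) p := by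
    have h1 : HasDerivAt (fun q => F.curv q t - F.curvAvg t) (pd F.curv p t) p :=
      (hasDerivAt_pd F.smooth_curv p t).sub_const _
    exact h1.smul (hasDerivAt_pd F.smooth_nor p t)
  rw [show pd (td F.c) p t = deriv (fun q => td F.c q t) p from rfl, he, hd.deriv, F.pd_nor]
  module

lemma hasDerivAt_v_t (ht : t ∈ Set.Ico 0 F.T) :
    HasDerivAt (fun s => F.v p s)
      (-((F.curv p t - F.curvAvg t) * F.curv p t * F.v p t)) t := by
  have hw : HasDerivAt (fun s => pderiv F.c p s) (td (pderiv F.c) p t) t :=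
    hasDerivAt_td F.smooth_cp p t
  have h2 := hw.cnorm (F.hreg p t)
  refine h2.congr_deriv ?_
  rw [F.td_cp ht, F.cp_eq, rinner_sub_left, rinner_smul_left, rinner_smul_left,
    rinner_smul_right, rinner_smul_right, F.rinner_nor_tang, F.rinner_tang_tang,
    show (‖F.v p t • F.tang p t‖ : ℝ) = F.v p t from by
      rw [norm_smul]; simp [Real.norm_eq_abs, abs_of_pos F.v_pos, F.norm_tang]]
  rw [div_eq_iff F.v_ne]
  ring

lemma hasDerivAt_tang_t (ht : t ∈ Set.Ico 0 F.T) :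
    HasDerivAt (fun s => F.tang p s) ((F.st p t) • F.nor p t) t := by
  have he : (fun s => F.tang p s) = fun s => (F.v p s)⁻¹ • pderiv F.c p s := by
    funext s
    exact F.htang p s
  rw [he]
  have h1 := ((F.hasDerivAt_v_t (p := p) ht).inv F.v_ne).smul (hasDerivAt_td F.smooth_cp p t)
  refine h1.congr_deriv ?_
  simp only [Pi.inv_apply]
  rw [F.td_cp ht, F.cp_eq, F.st_eq, F.pd_curv_eq]
  have hv := F.v_ne (p := p) (t := t)
  match_scalars <;> field_simp <;> ring

lemma td_tang_eq (ht : t ∈ Set.Ico 0 F.T) (p : ℝ) :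
    td F.tang p t = (F.st p t) • F.nor p t := (F.hasDerivAt_tang_t ht).deriv

lemma td_nor_eq (ht : t ∈ Set.Ico 0 F.T) (p : ℝ) :
    td F.nor p t = -((F.st p t) • F.tang p t) := by
  have h1 : HasDerivAt (fun s => F.nor p s) (Complex.I * ((F.st p t) • F.nor p t)) t := by
    have := (F.hasDerivAt_tang_t (p := p) ht).const_mul Complex.I
    have he : (fun s => Complex.I * F.tang p s) = fun s => F.nor p s := by
      funext s
      rw [F.hnor]
    rwa [he] at this
  rw [show td F.nor p t = deriv (fun s => F.nor p s) t from rfl, h1.deriv, F.hnor,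
    Complex.real_smul, Complex.real_smul]
  have : Complex.I * Complex.I = -1 := Complex.I_mul_I
  push_cast
  linear_combination (↑(F.st p t) * F.tang p t : ℂ) * this

lemma td_pdtang (ht : t ∈ Set.Ico 0 F.T) :
    td (pd F.tang) p t = (pd F.st p t) • F.nor p t
      - ((F.st p t) * (F.curv p t * F.v p t)) • F.tang p t := by
  rw [td_pd_comm F.smooth_tang]
  have he : (fun q => td F.tang q t) = fun q => (F.st q t) • F.nor q t := by
    funext q
    exact F.td_tang_eq ht q
  have hd : HasDerivAt (fun q => (F.st q t) • F.nor q t)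
      ((F.st p t) • pd F.nor p t + (pd F.st p t) • F.nor p t) p :=
    (hasDerivAt_pd F.smooth_st p t).smul (hasDerivAt_pd F.smooth_nor p t)
  rw [show pd (td F.tang) p t = deriv (fun q => td F.tang q t) p from rfl, he, hd.deriv,
    F.pd_nor]
  module

lemma hasDerivAt_curvmul_t (ht : t ∈ Set.Ico 0 F.T) :
    HasDerivAt (fun s => F.curv p s * F.v p s) (pd F.st p t) t := by
  have he : (fun s => F.curv p s * F.v p s)
      = fun s => rinner (pd F.tang p s) (F.nor p s) := by
    funext s
    rw [show pd F.tang p s = deriv (fun q => F.tang q s) p from rfl, F.hfrenet,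
      rinner_smul_left, F.rinner_nor_nor, mul_one]
    rfl
  rw [he]
  have h1 := hasDerivAt_rinner (hasDerivAt_td F.smooth_pdtang p t)
    (hasDerivAt_td F.smooth_nor p t)
  convert h1 using 1
  rw [F.td_pdtang ht, F.td_nor_eq ht, F.pd_tang_eq, rinner_sub_left, rinner_smul_left,
    rinner_smul_left, rinner_neg_right, rinner_smul_right, rinner_smul_left,
    F.rinner_nor_nor, F.rinner_tang_nor, F.rinner_nor_tang]
  ring

lemma hasDerivAt_curv_t (ht : t ∈ Set.Ico 0 F.T) :
    HasDerivAt (fun s => F.curv p s)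
      ((pd F.st p t) * (F.v p t)⁻¹
        + (F.curv p t - F.curvAvg t) * (F.curv p t)^2) t := by
  have he : (fun s => F.curv p s) = fun s => (F.curv p s * F.v p s) * (F.v p s)⁻¹ := by
    funext s
    rw [mul_assoc, mul_inv_cancel₀ F.v_ne, mul_one]
  rw [he]
  have h1 := (F.hasDerivAt_curvmul_t (p := p) ht).mul ((F.hasDerivAt_v_t (p := p) ht).inv F.v_ne)
  refine h1.congr_deriv ?_
  simp only [Pi.inv_apply]
  have hv := F.v_ne (p := p) (t := t)
  field_simp

lemma hasDerivAt_curvsqmul_t (ht : t ∈ Set.Ico 0 F.T) :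
    HasDerivAt (fun s => (F.curv p s)^2 * F.v p s)
      (2 * F.curv p t * pd F.st p t
        + (F.curv p t)^3 * (F.curv p t - F.curvAvg t) * F.v p t) t := by
  have he : (fun s => (F.curv p s)^2 * F.v p s)
      = fun s => (F.curv p s * F.v p s) * F.curv p s := by
    funext s; ring
  rw [he]
  have h1 := (F.hasDerivAt_curvmul_t (p := p) ht).mul (F.hasDerivAt_curv_t (p := p) ht)
  refine h1.congr_deriv ?_
  have hv := F.v_ne (p := p) (t := t)
  field_simp
  ring

end APCSF
end Evolution

section ParamIntegral

lemma hasDerivAt_param_integral {g : ℝ → ℝ → ℝ} (hg : ContDiff ℝ (⊤ : ℕ∞) ↿g) (a b t₀ : ℝ) :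
    HasDerivAt (fun s => ∫ p in a..b, g p s) (∫ p in a..b, td g p t₀) t₀ := by
  obtain ⟨M, hM⟩ : ∃ M, ∀ z ∈ (Set.uIcc a b ×ˢ Metric.closedBall t₀ 1),
      ‖(↿(td g)) z‖ ≤ M :=
    (isCompact_uIcc.prod (isCompact_closedBall t₀ 1)).exists_bound_of_continuousOn
      ((contDiff_td hg).continuous).continuousOn
  have key := intervalIntegral.hasDerivAt_integral_of_dominated_loc_of_deriv_le
    (𝕜 := ℝ) (μ := volume) (F := fun s p => g p s) (F' := fun s p => td g p s)
    (x₀ := t₀) (a := a) (b := b) (bound := fun _ => M) (s := Metric.ball t₀ 1) (Metric.ball_mem_nhds t₀ one_pos)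
    ?_ ?_ ?_ ?_ ?_ ?_
  · exact key.2
  · filter_upwards with x
    exact (continuous_slice1 hg x).aestronglyMeasurable
  · exact intervalIntegrable_slice1 hg t₀ a b
  · exact (continuous_slice1 (contDiff_td hg) t₀).aestronglyMeasurable
  · filter_upwards with p hp x hx
    exact hM (p, x) (Set.mk_mem_prod (Set.uIoc_subset_uIcc hp)
      (Metric.ball_subset_closedBall hx))
  · exact intervalIntegrable_const
  · filter_upwards with p hp x hx
    exact hasDerivAt_td hg p x

lemma integral_pd_eq_sub {g : ℝ → ℝ → ℝ} (hg : ContDiff ℝ (⊤ : ℕ∞) ↿g) (a b t : ℝ) :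
    ∫ p in a..b, pd g p t = g b t - g a t := by
  apply intervalIntegral.integral_deriv_eq_sub
  · intro x _
    exact (contDiff_slice1 hg t).differentiable (by simp) x
  · have : Continuous fun p => pd g p t :=
      (contDiff_pd hg).continuous.comp (continuous_id.prodMk continuous_const)
    exact this.intervalIntegrable a b

end ParamIntegral

section MainDeriv
namespace APCSF
variable (F : APCSF) {p t : ℝ}

lemma smooth_kv : ContDiff ℝ (⊤ : ℕ∞) ↿(fun p t => F.curv p t * F.v p t) := by
  have : ↿(fun p t => F.curv p t * F.v p t)
      = fun z : ℝ × ℝ => (↿F.curv) z * (↿F.v) z := rfl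
  rw [this]; exact F.smooth_curv.mul F.smooth_v

lemma smooth_k2v : ContDiff ℝ (⊤ : ℕ∞) ↿(fun p t => (F.curv p t)^2 * F.v p t) := by
  have : ↿(fun p t => (F.curv p t)^2 * F.v p t)
      = fun z : ℝ × ℝ => ((↿F.curv) z)^2 * (↿F.v) z := rfl
  rw [this]; exact (F.smooth_curv.pow 2).mul F.smooth_v

lemma smooth_w : ContDiff ℝ (⊤ : ℕ∞) ↿(fun p t => 2 * F.curv p t * F.st p t) := by
  have : ↿(fun p t => 2 * F.curv p t * F.st p t)
      = fun z : ℝ × ℝ => 2 * (↿F.curv) z * (↿F.st) z := rfl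
  rw [this]; exact (contDiff_const.mul F.smooth_curv).mul F.smooth_st

lemma len_eq (t : ℝ) : F.len t = ∫ p in F.pa..F.pb, F.v p t := F.hlen t

lemma len_pos (t : ℝ) : 0 < F.len t := by
  rw [F.len_eq]
  exact intervalIntegral.intervalIntegral_pos_of_pos_on
    (intervalIntegrable_slice1 F.smooth_v t F.pa F.pb)
    (fun x _ => F.v_pos) F.hab

lemma len_ne (t : ℝ) : F.len t ≠ 0 := ne_of_gt (F.len_pos t)

lemma curvAvg_mul (t : ℝ) :
    F.curvAvg t * F.len t = ∫ p in F.pa..F.pb, F.curv p t * F.v p t := F.hcurvAvg t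

lemma curvAvg_eq (s : ℝ) :
    F.curvAvg s = (∫ p in F.pa..F.pb, F.curv p s * F.v p s) / F.len s := by
  rw [← F.curvAvg_mul, mul_div_assoc, div_self (F.len_ne s), mul_one]

lemma hasDerivAt_len (ht : t ∈ Set.Ico 0 F.T) :
    HasDerivAt F.len
      (∫ p in F.pa..F.pb, -((F.curv p t - F.curvAvg t) * F.curv p t * F.v p t)) t := by
  have h := hasDerivAt_param_integral F.smooth_v F.pa F.pb t
  have he : F.len = fun s => ∫ p in F.pa..F.pb, F.v p s := funext F.len_eq
  rw [he]
  convert h using 1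
  apply intervalIntegral.integral_congr
  intro p _
  exact ((F.hasDerivAt_v_t ht).deriv).symm

lemma hasDerivAt_intkv (ht : t ∈ Set.Ico 0 F.T) :
    HasDerivAt (fun s => ∫ p in F.pa..F.pb, F.curv p s * F.v p s)
      (F.st F.pb t - F.st F.pa t) t := by
  have h := hasDerivAt_param_integral F.smooth_kv F.pa F.pb t
  convert h using 1
  rw [show (∫ p in F.pa..F.pb, td (fun p t => F.curv p t * F.v p t) p t)
      = ∫ p in F.pa..F.pb, pd F.st p t from
    intervalIntegral.integral_congr fun p _ => by
      rw [show td (fun p t => F.curv p t * F.v p t) p t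
        = deriv (fun s => F.curv p s * F.v p s) t from rfl]
      exact (F.hasDerivAt_curvmul_t ht).deriv]
  rw [integral_pd_eq_sub F.smooth_st]

lemma pd_w_eq (t : ℝ) (p : ℝ) : pd (fun p t => 2 * F.curv p t * F.st p t) p t
    = 2 * pd F.curv p t * F.st p t + 2 * F.curv p t * pd F.st p t := by
  have hd : HasDerivAt (fun q => 2 * F.curv q t * F.st q t)
      ((2 * pd F.curv p t) * F.st p t + (2 * F.curv p t) * pd F.st p t) p :=
    ((hasDerivAt_pd F.smooth_curv p t).const_mul 2).mul (hasDerivAt_pd F.smooth_st p t)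
  rw [show pd (fun p t => 2 * F.curv p t * F.st p t) p t
    = deriv (fun q => 2 * F.curv q t * F.st q t) p from rfl, hd.deriv]

lemma hasDerivAt_intk2v (ht : t ∈ Set.Ico 0 F.T) :
    HasDerivAt (fun s => ∫ p in F.pa..F.pb, (F.curv p s)^2 * F.v p s)
      (2 * F.curv F.pb t * F.st F.pb t - 2 * F.curv F.pa t * F.st F.pa t
        - 2 * (∫ p in F.pa..F.pb, (F.st p t)^2 * F.v p t)
        + (∫ p in F.pa..F.pb,
            (F.curv p t)^3 * (F.curv p t - F.curvAvg t) * F.v p t)) t := by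
  have h := hasDerivAt_param_integral F.smooth_k2v F.pa F.pb t
  convert h using 1
  have e1 : (∫ p in F.pa..F.pb, td (fun p t => (F.curv p t)^2 * F.v p t) p t)
      = ∫ p in F.pa..F.pb, (pd (fun p t => 2 * F.curv p t * F.st p t) p t
          - 2 * ((F.st p t)^2 * F.v p t)
          + (F.curv p t)^3 * (F.curv p t - F.curvAvg t) * F.v p t) := by
    apply intervalIntegral.integral_congr
    intro p _
    show td (fun p t => (F.curv p t)^2 * F.v p t) p t
      = pd (fun p t => 2 * F.curv p t * F.st p t) p t - 2 * ((F.st p t)^2 * F.v p t)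
        + (F.curv p t)^3 * (F.curv p t - F.curvAvg t) * F.v p t
    rw [show td (fun p t => (F.curv p t)^2 * F.v p t) p t
      = deriv (fun s => (F.curv p s)^2 * F.v p s) t from rfl,
      (F.hasDerivAt_curvsqmul_t ht).deriv, F.pd_w_eq, F.pd_curv_eq]
    ring
  rw [e1]
  have i1 : IntervalIntegrable (fun p => pd (fun p t => 2 * F.curv p t * F.st p t) p t)
      volume F.pa F.pb := intervalIntegrable_slice1 (contDiff_pd F.smooth_w) t F.pa F.pb
  have i2 : IntervalIntegrable (fun p => 2 * ((F.st p t)^2 * F.v p t)) volume F.pa F.pb := by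
    have : Continuous fun p => 2 * ((F.st p t)^2 * F.v p t) :=
      (continuous_const.mul (((continuous_slice1 F.smooth_st t).pow 2).mul
        (continuous_slice1 F.smooth_v t)))
    exact this.intervalIntegrable _ _
  have i3 : IntervalIntegrable
      (fun p => (F.curv p t)^3 * (F.curv p t - F.curvAvg t) * F.v p t) volume F.pa F.pb := by
    have : Continuous fun p => (F.curv p t)^3 * (F.curv p t - F.curvAvg t) * F.v p t :=
      (((continuous_slice1 F.smooth_curv t).pow 3).mul
        ((continuous_slice1 F.smooth_curv t).sub continuous_const)).mul
        (continuous_slice1 F.smooth_v t)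
    exact this.intervalIntegrable _ _
  rw [intervalIntegral.integral_add (i1.sub i2) i3, intervalIntegral.integral_sub i1 i2,
    integral_pd_eq_sub F.smooth_w, intervalIntegral.integral_const_mul]

lemma hasDerivAt_curvAvg (ht : t ∈ Set.Ico 0 F.T) : ∃ r, HasDerivAt F.curvAvg r t := by
  have h1 := F.hasDerivAt_intkv ht
  have h2 := F.hasDerivAt_len ht
  have he : F.curvAvg = fun s =>
      (∫ p in F.pa..F.pb, F.curv p s * F.v p s) / F.len s := funext F.curvAvg_eq
  exact ⟨_, by rw [he]; exact h1.div h2 (F.len_ne t)⟩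

lemma main_hasDerivAt (ht : t ∈ Set.Ico 0 F.T) :
    HasDerivAt (fun s => ∫ p in F.pa..F.pb, (F.curv p s - F.curvAvg s)^2 * F.v p s)
      (2 * ((F.curv F.pb t - F.curvAvg t) * F.st F.pb t
            - (F.curv F.pa t - F.curvAvg t) * F.st F.pa t)
        - 2 * (∫ p in F.pa..F.pb, (F.st p t)^2 * F.v p t)
        + (∫ p in F.pa..F.pb, (F.curv p t - F.curvAvg t)^4 * F.v p t)
        + 3 * F.curvAvg t
            * (∫ p in F.pa..F.pb, (F.curv p t - F.curvAvg t)^3 * F.v p t)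
        + 2 * (F.curvAvg t)^2
            * (∫ p in F.pa..F.pb, (F.curv p t - F.curvAvg t)^2 * F.v p t)) t := by
  obtain ⟨r, hr⟩ := F.hasDerivAt_curvAvg ht
  have h1 := F.hasDerivAt_intk2v ht
  have h2 := F.hasDerivAt_intkv ht
  have h3 := F.hasDerivAt_len ht
  -- continuity helpers at time t
  have cκ : Continuous fun p => F.curv p t := continuous_slice1 F.smooth_curv t
  have cv : Continuous fun p => F.v p t := continuous_slice1 F.smooth_v t
  -- rewrite the integral as a combination
  have he : (fun s => ∫ p in F.pa..F.pb, (F.curv p s - F.curvAvg s)^2 * F.v p s)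
      = fun s => (∫ p in F.pa..F.pb, (F.curv p s)^2 * F.v p s)
        - 2 * F.curvAvg s * (∫ p in F.pa..F.pb, F.curv p s * F.v p s)
        + (F.curvAvg s)^2 * F.len s := by
    funext s
    have cκs : Continuous fun p => F.curv p s := continuous_slice1 F.smooth_curv s
    have cvs : Continuous fun p => F.v p s := continuous_slice1 F.smooth_v s
    have j1 : IntervalIntegrable (fun p => (F.curv p s)^2 * F.v p s) volume F.pa F.pb :=
      ((cκs.pow 2).mul cvs).intervalIntegrable _ _
    have j2 : IntervalIntegrable (fun p => (2 * F.curvAvg s) * (F.curv p s * F.v p s))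
        volume F.pa F.pb := (continuous_const.mul (cκs.mul cvs)).intervalIntegrable _ _
    have j3 : IntervalIntegrable (fun p => (F.curvAvg s)^2 * F.v p s) volume F.pa F.pb :=
      (continuous_const.mul cvs).intervalIntegrable _ _
    rw [show (∫ p in F.pa..F.pb, (F.curv p s - F.curvAvg s)^2 * F.v p s)
        = ∫ p in F.pa..F.pb, ((F.curv p s)^2 * F.v p s
            - (2 * F.curvAvg s) * (F.curv p s * F.v p s)
            + (F.curvAvg s)^2 * F.v p s) from
      intervalIntegral.integral_congr fun p _ => by ring]
    rw [intervalIntegral.integral_add (j1.sub j2) j3, intervalIntegral.integral_sub j1 j2,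
      intervalIntegral.integral_const_mul, intervalIntegral.integral_const_mul, F.len_eq]
  rw [he]
  have total := ((h1.sub ((hr.const_mul 2).mul h2)).add ((hr.pow 2).mul h3))
  refine total.congr_deriv ?_
  simp only [Pi.pow_apply]
  symm
  -- value algebra
  have hI2 : (∫ p in F.pa..F.pb, F.curv p t * F.v p t) = F.curvAvg t * F.len t :=
    (F.curvAvg_mul t).symm
  -- integral identity
  have jf4 : IntervalIntegrable (fun p => (F.curv p t - F.curvAvg t)^4 * F.v p t)
      volume F.pa F.pb := (((cκ.sub continuous_const).pow 4).mul cv).intervalIntegrable _ _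
  have jf3 : IntervalIntegrable
      (fun p => 3 * F.curvAvg t * ((F.curv p t - F.curvAvg t)^3 * F.v p t))
      volume F.pa F.pb :=
    (continuous_const.mul (((cκ.sub continuous_const).pow 3).mul cv)).intervalIntegrable _ _
  have jf2 : IntervalIntegrable
      (fun p => 2 * (F.curvAvg t)^2 * ((F.curv p t - F.curvAvg t)^2 * F.v p t))
      volume F.pa F.pb :=
    (continuous_const.mul (((cκ.sub continuous_const).pow 2).mul cv)).intervalIntegrable _ _
  have jq1 : IntervalIntegrable
      (fun p => (F.curvAvg t)^2 * ((F.curv p t - F.curvAvg t) * F.curv p t * F.v p t))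
      volume F.pa F.pb :=
    (continuous_const.mul (((cκ.sub continuous_const).mul cκ).mul cv)).intervalIntegrable _ _
  have hQ3 : (∫ p in F.pa..F.pb, (F.curv p t)^3 * (F.curv p t - F.curvAvg t) * F.v p t)
      = (∫ p in F.pa..F.pb, (F.curv p t - F.curvAvg t)^4 * F.v p t)
        + 3 * F.curvAvg t * (∫ p in F.pa..F.pb, (F.curv p t - F.curvAvg t)^3 * F.v p t)
        + 2 * (F.curvAvg t)^2
            * (∫ p in F.pa..F.pb, (F.curv p t - F.curvAvg t)^2 * F.v p t)
        + (F.curvAvg t)^2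
            * (∫ p in F.pa..F.pb, (F.curv p t - F.curvAvg t) * F.curv p t * F.v p t) := by
    rw [show (∫ p in F.pa..F.pb, (F.curv p t)^3 * (F.curv p t - F.curvAvg t) * F.v p t)
        = ∫ p in F.pa..F.pb, ((F.curv p t - F.curvAvg t)^4 * F.v p t
            + 3 * F.curvAvg t * ((F.curv p t - F.curvAvg t)^3 * F.v p t)
            + 2 * (F.curvAvg t)^2 * ((F.curv p t - F.curvAvg t)^2 * F.v p t)
            + (F.curvAvg t)^2 * ((F.curv p t - F.curvAvg t) * F.curv p t * F.v p t)) from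
      intervalIntegral.integral_congr fun p _ => by ring]
    rw [intervalIntegral.integral_add ((jf4.add jf3).add jf2) jq1,
      intervalIntegral.integral_add (jf4.add jf3) jf2,
      intervalIntegral.integral_add jf4 jf3,
      intervalIntegral.integral_const_mul, intervalIntegral.integral_const_mul,
      intervalIntegral.integral_const_mul]
  have hneg : (∫ p in F.pa..F.pb, -((F.curv p t - F.curvAvg t) * F.curv p t * F.v p t))
      = -(∫ p in F.pa..F.pb, (F.curv p t - F.curvAvg t) * F.curv p t * F.v p t) :=
    intervalIntegral.integral_neg
  rw [hneg] at *
  linear_combination -hQ3 + (2 * r) * hI2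
end APCSF
end MainDeriv

section Boundary
open Topology

lemma smul_cancel_ne {a b : ℝ} {z : ℂ} (hz : z ≠ 0) (h : a • z = b • z) : a = b := by
  have h2 : (a - b) • z = 0 := by rw [sub_smul, h, sub_self]
  rcases smul_eq_zero.mp h2 with h3 | h3
  · linarith [sub_eq_zero.mp (by exact_mod_cast h3)]
  · exact absurd h3 hz

namespace SupportCurve
variable (S : SupportCurve)

lemma smooth_dsf : ContDiff ℝ (⊤ : ℕ∞) (deriv S.sf) := by
  have he : deriv S.sf = fun u => fderiv ℝ S.sf u 1 := by
    funext u
    exact (fderiv_apply_one_eq_deriv).symm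
  rw [he]
  exact (S.hsmooth.fderiv_right (by simp)).clm_apply contDiff_const

lemma dsf_ne (u : ℝ) : deriv S.sf u ≠ 0 := by
  intro h
  have h2 := S.harclength u
  rw [h] at h2
  simp at h2

lemma exists_int_of_sf_eq {x y : ℝ} (h : S.sf x = S.sf y) : ∃ n : ℤ, x = y + n * S.per := by
  have hx0 : 0 ≤ x - ⌊x / S.per⌋ * S.per := Int.sub_floor_div_mul_nonneg x S.hper
  have hx1 : x - ⌊x / S.per⌋ * S.per < S.per := Int.sub_floor_div_mul_lt x S.hper
  have hy0 : 0 ≤ y - ⌊y / S.per⌋ * S.per := Int.sub_floor_div_mul_nonneg y S.hper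
  have hy1 : y - ⌊y / S.per⌋ * S.per < S.per := Int.sub_floor_div_mul_lt y S.hper
  have hfx : S.sf (x - ⌊x / S.per⌋ * S.per) = S.sf x := S.hperiodic.sub_int_mul_eq _
  have hfy : S.sf (y - ⌊y / S.per⌋ * S.per) = S.sf y := S.hperiodic.sub_int_mul_eq _
  have heq := S.hinj ⟨hx0, hx1⟩ ⟨hy0, hy1⟩ (by rw [hfx, hfy, h])
  refine ⟨⌊x / S.per⌋ - ⌊y / S.per⌋, ?_⟩
  push_cast
  linarith

lemma near_param (u₀ : ℝ) {ε : ℝ} (hε : 0 < ε) :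
    ∃ δ > 0, ∀ z ∈ Set.range S.sf, dist z (S.sf u₀) < δ →
      ∃ u, |u - u₀| < ε ∧ S.sf u = z := by
  by_contra hc
  push_neg at hc
  have hc' : ∀ n : ℕ, ∃ z ∈ Set.range S.sf, dist z (S.sf u₀) < 1/(n+1) ∧
      ∀ u, |u - u₀| < ε → S.sf u ≠ z := by
    intro n
    obtain ⟨z, hz1, hz2, hz3⟩ := hc (1/(n+1)) (by positivity)
    exact ⟨z, hz1, hz2, fun u hu => fun he => hz3 u hu he⟩
  choose z hzr hzd hzu using hc'
  choose x hx using fun n => hzr n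
  -- reduce to a fundamental domain
  set u : ℕ → ℝ := fun n => u₀ + ((x n - u₀) - ⌊(x n - u₀) / S.per⌋ * S.per) with hu
  have hsfu : ∀ n, S.sf (u n) = z n := by
    intro n
    have h1 : S.sf (u n) = S.sf (u₀ + (x n - u₀)) := by
      rw [hu]
      have := S.hperiodic.sub_int_mul_eq (x := u₀ + (x n - u₀)) (⌊(x n - u₀) / S.per⌋)
      simp only [add_sub_assoc] at this ⊢
      exact this
    rw [h1]
    simp only [add_sub_cancel]
    exact hx n
  have humem : ∀ n, u n ∈ Set.Icc u₀ (u₀ + S.per) := by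
    intro n
    constructor
    · have := Int.sub_floor_div_mul_nonneg (x n - u₀) S.hper
      rw [hu]; dsimp only; linarith
    · have := Int.sub_floor_div_mul_lt (x n - u₀) S.hper
      rw [hu]; dsimp only; linarith
  obtain ⟨ustar, hustar, φ, hφ, hlim⟩ :=
    tendsto_subseq_of_bounded (Metric.isBounded_Icc u₀ (u₀ + S.per)) humem
  have hzlim : Tendsto (fun n => z (φ n)) atTop (𝓝 (S.sf u₀)) := by
    rw [tendsto_iff_dist_tendsto_zero]
    apply squeeze_zero (fun n => dist_nonneg) (fun n => le_of_lt (hzd (φ n)))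
    have h2 : Tendsto (fun n : ℕ => 1/((φ n : ℝ)+1)) atTop (𝓝 0) :=
      (tendsto_one_div_add_atTop_nhds_zero_nat).comp (hφ.tendsto_atTop.comp tendsto_id)
    exact h2
  have hsfstar : S.sf ustar = S.sf u₀ := by
    have h1 : Tendsto (fun n => S.sf (u (φ n))) atTop (𝓝 (S.sf ustar)) :=
      (S.hsmooth.continuous.continuousAt).tendsto.comp hlim
    have h2 : (fun n => S.sf (u (φ n))) = fun n => z (φ n) := funext fun n => hsfu (φ n)
    rw [h2] at h1
    exact tendsto_nhds_unique h1 hzlim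
  obtain ⟨n, hn⟩ := S.exists_int_of_sf_eq hsfstar
  have hstarIcc : ustar ∈ Set.Icc u₀ (u₀ + S.per) := by
    rwa [closure_Icc] at hustar
  have hn01 : n = 0 ∨ n = 1 := by
    rcases hstarIcc with ⟨hl, hr⟩
    rw [hn] at hl hr
    have h0 : (0 : ℝ) ≤ n * S.per := by linarith
    have h1 : (n : ℝ) * S.per ≤ S.per := by linarith
    have hn0 : (0 : ℤ) ≤ n := by
      by_contra hcon
      push_neg at hcon
      have : (n : ℝ) ≤ -1 := by exact_mod_cast Int.le_sub_one_of_lt hcon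
      nlinarith [S.hper]
    have hn1 : n ≤ 1 := by
      by_contra hcon
      push_neg at hcon
      have : (2 : ℝ) ≤ n := by exact_mod_cast hcon
      nlinarith [S.hper]
    omega
  -- in either case we find parameters converging to u₀
  have main : ∀ m : ℕ, ∃ um, S.sf um = z (φ m) ∧ |um - u₀| ≤ |u (φ m) - ustar| := by
    intro m
    rcases hn01 with h | h
    · have hstar : ustar = u₀ := by rw [hn, h]; push_cast; ring
      exact ⟨u (φ m), hsfu (φ m), le_of_eq (by rw [hstar])⟩
    · have hstar : ustar = u₀ + S.per := by rw [hn, h]; push_cast; ring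
      refine ⟨u (φ m) - S.per, ?_, ?_⟩
      · rw [← hsfu (φ m)]
        have h2 := S.hperiodic.sub_int_mul_eq (x := u (φ m)) 1
        simpa using h2
      · have h3 : u (φ m) - S.per - u₀ = u (φ m) - ustar := by rw [hstar]; ring
        rw [h3]
  choose um hum1 hum2 using main
  have hdist : Tendsto (fun m => |u (φ m) - ustar|) atTop (𝓝 0) := by
    have h1 : Tendsto (fun m => u (φ m) - ustar) atTop (𝓝 0) := by
      have h2 := hlim.sub (tendsto_const_nhds (x := ustar))
      simpa using h2
    have := h1.abs
    simpa using this
  have hev : ∀ᶠ m in atTop, |u (φ m) - ustar| < ε := hdist.eventually_lt_const hε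
  obtain ⟨m, hm⟩ := hev.exists
  exact hzu (φ m) (um m) (lt_of_le_of_lt (hum2 m) hm) (hum1 m)

end SupportCurve
end Boundary

section Lift
open Topology

namespace SupportCurve
variable (S : SupportCurve)

lemma exists_local_lift {g : ℝ → ℂ} {g' : ℂ} {t₀ u₀ : ℝ}
    (hg : HasDerivAt g g' t₀)
    (hrange : ∀ᶠ t in 𝓝 t₀, g t ∈ Set.range S.sf)
    (h0 : S.sf u₀ = g t₀) :
    ∃ w : ℝ → ℝ, ∃ w' : ℝ, w t₀ = u₀ ∧ HasDerivAt w w' t₀ ∧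
      ∀ᶠ t in 𝓝 t₀, S.sf (w t) = g t := by
  set T0 := deriv S.sf u₀ with hT0
  set θ : ℝ → ℝ := fun u => rinner (S.sf u - S.sf u₀) T0 with hθdef
  have hθsm : ContDiff ℝ (⊤ : ℕ∞) θ :=
    ContDiff.rinner2 (S.hsmooth.sub contDiff_const) contDiff_const
  have hθd : HasDerivAt θ 1 u₀ := by
    have h1 : HasDerivAt (fun u => S.sf u - S.sf u₀) T0 u₀ :=
      ((S.hsmooth.differentiable (by simp) u₀).hasDerivAt).sub_const _
    have h2 := hasDerivAt_rinner h1 ((hasDerivAt_const u₀ T0))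
    have h3 : rinner T0 (T0) + rinner (S.sf u₀ - S.sf u₀) 0 = 1 := by
      rw [rinner_self, hT0, S.harclength]
      simp [rinner]
    rw [← h3]
    convert h2 using 2
  have hθs : HasStrictDerivAt θ 1 u₀ :=
    hθsm.contDiffAt.hasStrictDerivAt' hθd (by simp)
  set inv : ℝ → ℝ := hθs.localInverse θ 1 u₀ one_ne_zero with hinv
  have hlinv : ∀ᶠ u in 𝓝 u₀, inv (θ u) = u :=
    (hθs.hasStrictFDerivAt_equiv one_ne_zero).eventually_left_inverse
  have hinv0 : inv (θ u₀) = u₀ :=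
    (hθs.hasStrictFDerivAt_equiv one_ne_zero).localInverse_apply_image
  have hinvd : HasStrictDerivAt inv (1 : ℝ)⁻¹ (θ u₀) :=
    hθs.to_localInverse one_ne_zero
  set ρ : ℝ → ℝ := fun t => rinner (g t - S.sf u₀) T0 with hρdef
  have hρd : HasDerivAt ρ (rinner g' T0 + rinner (g t₀ - S.sf u₀) 0) t₀ :=
    hasDerivAt_rinner (hg.sub_const (S.sf u₀)) (hasDerivAt_const t₀ T0)
  have hρ0 : ρ t₀ = θ u₀ := by
    simp only [hρdef, hθdef, h0]
  set w : ℝ → ℝ := fun t => inv (ρ t) with hw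
  have hwd : HasDerivAt w ((1 : ℝ)⁻¹ * (rinner g' T0 + rinner (g t₀ - S.sf u₀) 0)) t₀ := by
    have hinvd2 : HasDerivAt inv (1 : ℝ)⁻¹ (ρ t₀) := by
      rw [hρ0]
      exact hinvd.hasDerivAt
    exact hinvd2.comp t₀ hρd
  have hw0 : w t₀ = u₀ := by
    rw [hw]
    simp only
    rw [hρ0, hinv0]
  obtain ⟨ε, hε, hball⟩ := Metric.eventually_nhds_iff.mp hlinv
  obtain ⟨δ, hδ, hδp⟩ := S.near_param u₀ hε
  have hgball : ∀ᶠ t in 𝓝 t₀, dist (g t) (S.sf u₀) < δ := by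
    have hcont : ContinuousAt g t₀ := hg.continuousAt
    have : ∀ᶠ t in 𝓝 t₀, g t ∈ Metric.ball (g t₀) δ :=
      hcont.preimage_mem_nhds (Metric.ball_mem_nhds (g t₀) hδ)
    filter_upwards [this] with t ht
    rw [h0]
    exact ht
  refine ⟨w, _, hw0, hwd, ?_⟩
  filter_upwards [hgball, hrange] with t ht hr
  obtain ⟨u, hu1, hu2⟩ := hδp (g t) hr ht
  have hθρ : θ u = ρ t := by
    simp only [hθdef, hρdef, hu2]
  have h5 : inv (θ u) = u := hball (by rwa [Real.dist_eq])
  rw [hw]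
  simp only
  rw [← hθρ, h5, hu2]

end SupportCurve
end Lift

section BoundaryId
open Topology
namespace APCSF
variable (F : APCSF)

lemma boundary_st_a (S : SupportCurve) (hbc : F.NeumannBC S) {t : ℝ}
    (ht : t ∈ Set.Ioo 0 F.T) {u : ℝ} (hu : S.sf u = F.c F.pa t) :
    F.st F.pa t = (F.curv F.pa t - F.curvAvg t) * S.sk u := by
  have htI : t ∈ Set.Ico 0 F.T := ⟨le_of_lt ht.1, ht.2⟩
  have hIoo : ∀ᶠ s in 𝓝 t, s ∈ Set.Ico 0 F.T := by
    filter_upwards [Ioo_mem_nhds ht.1 ht.2] with s hs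
    exact ⟨le_of_lt hs.1, hs.2⟩
  have hg : HasDerivAt (fun s => F.c F.pa s)
      ((F.curv F.pa t - F.curvAvg t) • F.nor F.pa t) t := F.hflow _ _ htI
  have hrange : ∀ᶠ s in 𝓝 t, F.c F.pa s ∈ Set.range S.sf := by
    filter_upwards [hIoo] with s hs
    exact (hbc.1 s hs).1
  obtain ⟨w, w', hw0, hwd, hev⟩ := S.exists_local_lift hg hrange hu
  have htg : ∀ᶠ s in 𝓝 t, F.tang F.pa s = -(Complex.I * deriv S.sf (w s)) := by
    filter_upwards [hev, hIoo] with s h1 h2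
    exact hbc.2.1 s h2 (w s) h1
  have hsfw : HasDerivAt (fun s => S.sf (w s)) (w' • deriv S.sf (w t)) t := by
    have h1 : HasDerivAt S.sf (deriv S.sf (w t)) (w t) :=
      (S.hsmooth.differentiable (by simp) (w t)).hasDerivAt
    have := h1.scomp t hwd
    simpa [Function.comp_def] using this
  have hc : HasDerivAt (fun s => S.sf (w s))
      ((F.curv F.pa t - F.curvAvg t) • F.nor F.pa t) t := by
    apply hg.congr_of_eventuallyEq
    filter_upwards [hev] with s hs
    exact hs
  have huniq : w' • deriv S.sf (w t) = (F.curv F.pa t - F.curvAvg t) • F.nor F.pa t :=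
    hsfw.unique hc
  have htga : F.tang F.pa t = -(Complex.I * deriv S.sf (w t)) := htg.self_of_nhds
  have hI : Complex.I * Complex.I = -1 := Complex.I_mul_I
  have hnora : F.nor F.pa t = deriv S.sf (w t) := by
    rw [F.hnor, htga]
    linear_combination (-(deriv S.sf (w t))) * hI
  have hw' : w' = F.curv F.pa t - F.curvAvg t := by
    apply smul_cancel_ne (S.dsf_ne (w t))
    rw [huniq, hnora]
  have hdt : HasDerivAt (fun s => F.tang F.pa s) ((F.st F.pa t) • F.nor F.pa t) t :=
    F.hasDerivAt_tang_t htI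
  have hdR : HasDerivAt (fun s => -(Complex.I * deriv S.sf (w s)))
      (-(Complex.I * (w' • deriv (deriv S.sf) (w t)))) t := by
    have h1 : HasDerivAt (deriv S.sf) (deriv (deriv S.sf) (w t)) (w t) :=
      (S.smooth_dsf.differentiable (by simp) (w t)).hasDerivAt
    have h2 := h1.scomp t hwd
    have h3 : HasDerivAt (fun s => deriv S.sf (w s)) (w' • deriv (deriv S.sf) (w t)) t := by
      simpa [Function.comp_def] using h2
    exact (h3.const_mul Complex.I).neg
  have hdt2 : HasDerivAt (fun s => F.tang F.pa s)
      (-(Complex.I * (w' • deriv (deriv S.sf) (w t)))) t :=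
    hdR.congr_of_eventuallyEq htg
  have hfin := hdt.unique hdt2
  rw [S.hsk (w t), hnora] at hfin
  have hkey : -(Complex.I * (w' • (S.sk (w t) • (Complex.I * deriv S.sf (w t)))))
      = (w' * S.sk (w t)) • deriv S.sf (w t) := by
    rw [Complex.real_smul, Complex.real_smul, Complex.real_smul]
    push_cast
    linear_combination (-(w' : ℂ) * (S.sk (w t)) * deriv S.sf (w t)) * hI
  rw [hkey] at hfin
  have := smul_cancel_ne (S.dsf_ne (w t)) hfin
  rw [this, hw', hw0]

lemma boundary_st_b (S : SupportCurve) (hbc : F.NeumannBC S) {t : ℝ}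
    (ht : t ∈ Set.Ioo 0 F.T) {u : ℝ} (hu : S.sf u = F.c F.pb t) :
    F.st F.pb t = -((F.curv F.pb t - F.curvAvg t) * S.sk u) := by
  have htI : t ∈ Set.Ico 0 F.T := ⟨le_of_lt ht.1, ht.2⟩
  have hIoo : ∀ᶠ s in 𝓝 t, s ∈ Set.Ico 0 F.T := by
    filter_upwards [Ioo_mem_nhds ht.1 ht.2] with s hs
    exact ⟨le_of_lt hs.1, hs.2⟩
  have hg : HasDerivAt (fun s => F.c F.pb s)
      ((F.curv F.pb t - F.curvAvg t) • F.nor F.pb t) t := F.hflow _ _ htI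
  have hrange : ∀ᶠ s in 𝓝 t, F.c F.pb s ∈ Set.range S.sf := by
    filter_upwards [hIoo] with s hs
    exact (hbc.1 s hs).2
  obtain ⟨w, w', hw0, hwd, hev⟩ := S.exists_local_lift hg hrange hu
  have htg : ∀ᶠ s in 𝓝 t, F.tang F.pb s = Complex.I * deriv S.sf (w s) := by
    filter_upwards [hev, hIoo] with s h1 h2
    exact hbc.2.2 s h2 (w s) h1
  have hsfw : HasDerivAt (fun s => S.sf (w s)) (w' • deriv S.sf (w t)) t := by
    have h1 : HasDerivAt S.sf (deriv S.sf (w t)) (w t) :=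
      (S.hsmooth.differentiable (by simp) (w t)).hasDerivAt
    have := h1.scomp t hwd
    simpa [Function.comp_def] using this
  have hc : HasDerivAt (fun s => S.sf (w s))
      ((F.curv F.pb t - F.curvAvg t) • F.nor F.pb t) t := by
    apply hg.congr_of_eventuallyEq
    filter_upwards [hev] with s hs
    exact hs
  have huniq : w' • deriv S.sf (w t) = (F.curv F.pb t - F.curvAvg t) • F.nor F.pb t :=
    hsfw.unique hc
  have htga : F.tang F.pb t = Complex.I * deriv S.sf (w t) := htg.self_of_nhds
  have hI : Complex.I * Complex.I = -1 := Complex.I_mul_I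
  have hnora : F.nor F.pb t = -(deriv S.sf (w t)) := by
    rw [F.hnor, htga]
    linear_combination (deriv S.sf (w t)) * hI
  have hw' : w' = -(F.curv F.pb t - F.curvAvg t) := by
    apply smul_cancel_ne (S.dsf_ne (w t))
    rw [huniq, hnora]
    module
  have hdt : HasDerivAt (fun s => F.tang F.pb s) ((F.st F.pb t) • F.nor F.pb t) t :=
    F.hasDerivAt_tang_t htI
  have hdR : HasDerivAt (fun s => Complex.I * deriv S.sf (w s))
      (Complex.I * (w' • deriv (deriv S.sf) (w t))) t := by
    have h1 : HasDerivAt (deriv S.sf) (deriv (deriv S.sf) (w t)) (w t) :=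
      (S.smooth_dsf.differentiable (by simp) (w t)).hasDerivAt
    have h2 := h1.scomp t hwd
    have h3 : HasDerivAt (fun s => deriv S.sf (w s)) (w' • deriv (deriv S.sf) (w t)) t := by
      simpa [Function.comp_def] using h2
    exact h3.const_mul Complex.I
  have hdt2 : HasDerivAt (fun s => F.tang F.pb s)
      (Complex.I * (w' • deriv (deriv S.sf) (w t))) t :=
    hdR.congr_of_eventuallyEq htg
  have hfin := hdt.unique hdt2
  rw [S.hsk (w t), hnora] at hfin
  have hkey : Complex.I * (w' • (S.sk (w t) • (Complex.I * deriv S.sf (w t))))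
      = (-(w' * S.sk (w t))) • deriv S.sf (w t) := by
    rw [Complex.real_smul, Complex.real_smul, Complex.real_smul]
    push_cast
    linear_combination ((w' : ℂ) * (S.sk (w t)) * deriv S.sf (w t)) * hI
  rw [hkey] at hfin
  have hfin2 : (-(F.st F.pb t)) • deriv S.sf (w t)
      = (-(w' * S.sk (w t))) • deriv S.sf (w t) := by
    rw [← hfin]
    module
  have := smul_cancel_ne (S.dsf_ne (w t)) hfin2
  have h7 : F.st F.pb t = w' * S.sk (w t) := by linarith
  rw [h7, hw', hw0]
  ring

end APCSF
end BoundaryId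

section Analysis
namespace APCSF
variable (F : APCSF)

lemma cont_f (t : ℝ) : Continuous fun p => F.curv p t - F.curvAvg t :=
  (continuous_slice1 F.smooth_curv t).sub continuous_const

lemma int_fv_zero (t : ℝ) :
    ∫ p in F.pa..F.pb, (F.curv p t - F.curvAvg t) * F.v p t = 0 := by
  have cκ : Continuous fun p => F.curv p t := continuous_slice1 F.smooth_curv t
  have cv : Continuous fun p => F.v p t := continuous_slice1 F.smooth_v t
  have j1 : IntervalIntegrable (fun p => F.curv p t * F.v p t) volume F.pa F.pb :=
    (cκ.mul cv).intervalIntegrable _ _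
  have j2 : IntervalIntegrable (fun p => F.curvAvg t * F.v p t) volume F.pa F.pb :=
    (continuous_const.mul cv).intervalIntegrable _ _
  rw [show (fun p => (F.curv p t - F.curvAvg t) * F.v p t)
      = fun p => F.curv p t * F.v p t - F.curvAvg t * F.v p t from
    funext fun p => by ring]
  rw [intervalIntegral.integral_sub j1 j2, intervalIntegral.integral_const_mul,
    ← F.curvAvg_mul, ← F.len_eq]
  ring

lemma exists_zero (t : ℝ) :
    ∃ p₀ ∈ Set.Icc F.pa F.pb, F.curv p₀ t - F.curvAvg t = 0 := by
  by_contra hno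
  push_neg at hno
  have hcont : ContinuousOn (fun p => F.curv p t - F.curvAvg t) (Set.Icc F.pa F.pb) :=
    (F.cont_f t).continuousOn
  have hz := F.int_fv_zero t
  have hmem : F.pa ∈ Set.Icc F.pa F.pb := ⟨le_refl _, le_of_lt F.hab⟩
  have hL : IntervalIntegrable (fun p => (F.curv p t - F.curvAvg t) * F.v p t)
      volume F.pa F.pb :=
    ((F.cont_f t).mul (continuous_slice1 F.smooth_v t)).intervalIntegrable _ _
  rcases (hno F.pa hmem).lt_or_gt with hneg | hpos
  · -- f < 0 everywhere
    have hall : ∀ p ∈ Set.Icc F.pa F.pb, F.curv p t - F.curvAvg t < 0 := by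
      intro q hq
      rcases (hno q hq).lt_or_gt with h | h
      · exact h
      · exfalso
        obtain ⟨r, hr, hr0⟩ := intermediate_value_Icc hq.1
          (hcont.mono (Set.Icc_subset_Icc le_rfl hq.2))
          (Set.mem_Icc.mpr ⟨le_of_lt hneg, le_of_lt h⟩)
        exact hno r ⟨hr.1, hr.2.trans hq.2⟩ hr0
    have hL2 : IntervalIntegrable (fun p => -((F.curv p t - F.curvAvg t) * F.v p t))
        volume F.pa F.pb := hL.neg
    have hpos2 : 0 < ∫ p in F.pa..F.pb, -((F.curv p t - F.curvAvg t) * F.v p t) := by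
      apply intervalIntegral.intervalIntegral_pos_of_pos_on hL2
      · intro x hx
        have h1 := hall x ⟨le_of_lt hx.1, le_of_lt hx.2⟩
        have h2 := F.v_pos (p := x) (t := t)
        nlinarith
      · exact F.hab
    rw [intervalIntegral.integral_neg, hz] at hpos2
    simp at hpos2
  · have hall : ∀ p ∈ Set.Icc F.pa F.pb, 0 < F.curv p t - F.curvAvg t := by
      intro q hq
      rcases (hno q hq).lt_or_gt with h | h
      · exfalso
        obtain ⟨r, hr, hr0⟩ := intermediate_value_Icc' hq.1
          (hcont.mono (Set.Icc_subset_Icc le_rfl hq.2))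
          (Set.mem_Icc.mpr ⟨le_of_lt h, le_of_lt hpos⟩)
        exact hno r ⟨hr.1, hr.2.trans hq.2⟩ hr0
      · exact h
    have hpos2 : 0 < ∫ p in F.pa..F.pb, (F.curv p t - F.curvAvg t) * F.v p t := by
      apply intervalIntegral.intervalIntegral_pos_of_pos_on hL
      · intro x hx
        have h1 := hall x ⟨le_of_lt hx.1, le_of_lt hx.2⟩
        have h2 := F.v_pos (p := x) (t := t)
        nlinarith
      · exact F.hab
    rw [hz] at hpos2
    simp at hpos2

lemma cs_bound (t : ℝ) :
    (∫ p in F.pa..F.pb, |F.curv p t - F.curvAvg t| * |F.st p t| * F.v p t)^2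
      ≤ (∫ p in F.pa..F.pb, (F.curv p t - F.curvAvg t)^2 * F.v p t)
        * (∫ p in F.pa..F.pb, (F.st p t)^2 * F.v p t) := by
  have cf : Continuous fun p => F.curv p t - F.curvAvg t := F.cont_f t
  have cst : Continuous fun p => F.st p t := continuous_slice1 F.smooth_st t
  have cv : Continuous fun p => F.v p t := continuous_slice1 F.smooth_v t
  have j1 : IntervalIntegrable (fun p => (F.curv p t - F.curvAvg t)^2 * F.v p t)
      volume F.pa F.pb := ((cf.pow 2).mul cv).intervalIntegrable _ _
  have j2 : IntervalIntegrable (fun p => |F.curv p t - F.curvAvg t| * |F.st p t| * F.v p t)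
      volume F.pa F.pb := ((cf.abs.mul cst.abs).mul cv).intervalIntegrable _ _
  have j3 : IntervalIntegrable (fun p => (F.st p t)^2 * F.v p t)
      volume F.pa F.pb := ((cst.pow 2).mul cv).intervalIntegrable _ _
  have hq : ∀ x : ℝ, 0 ≤ (∫ p in F.pa..F.pb, (F.curv p t - F.curvAvg t)^2 * F.v p t) * (x * x)
      + (2 * ∫ p in F.pa..F.pb, |F.curv p t - F.curvAvg t| * |F.st p t| * F.v p t) * x
      + (∫ p in F.pa..F.pb, (F.st p t)^2 * F.v p t) := by
    intro x
    have h2 : (∫ p in F.pa..F.pb,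
        ((x * |F.curv p t - F.curvAvg t| + |F.st p t|)^2 * F.v p t))
        = (∫ p in F.pa..F.pb, (F.curv p t - F.curvAvg t)^2 * F.v p t) * (x * x)
          + (2 * ∫ p in F.pa..F.pb, |F.curv p t - F.curvAvg t| * |F.st p t| * F.v p t) * x
          + (∫ p in F.pa..F.pb, (F.st p t)^2 * F.v p t) := by
      rw [show (fun p => (x * |F.curv p t - F.curvAvg t| + |F.st p t|)^2 * F.v p t)
          = fun p => (x * x) * ((F.curv p t - F.curvAvg t)^2 * F.v p t)
            + ((2 * x) * (|F.curv p t - F.curvAvg t| * |F.st p t| * F.v p t)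
              + (F.st p t)^2 * F.v p t) from funext fun p => by
        rw [← _root_.sq_abs (F.curv p t - F.curvAvg t), ← _root_.sq_abs (F.st p t)]
        ring]
      rw [intervalIntegral.integral_add (j1.const_mul _) ((j2.const_mul _).add j3),
        intervalIntegral.integral_add (j2.const_mul _) j3,
        intervalIntegral.integral_const_mul, intervalIntegral.integral_const_mul]
      ring
    rw [← h2]
    apply intervalIntegral.integral_nonneg (le_of_lt F.hab)
    intro q _
    have := F.v_pos (p := q) (t := t)
    positivity
  have hd := discrim_le_zero hq
  rw [discrim] at hd
  nlinarith [hd]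

end APCSF
end Analysis

section SupBound
namespace APCSF
variable (F : APCSF)

lemma pointval_bound (t : ℝ) {P : ℝ} (hP : P ∈ Set.Icc F.pa F.pb) :
    (F.curv P t - F.curvAvg t)^2
      ≤ 2 * Real.sqrt ((∫ p in F.pa..F.pb, (F.curv p t - F.curvAvg t)^2 * F.v p t)
          * (∫ p in F.pa..F.pb, (F.st p t)^2 * F.v p t)) := by
  obtain ⟨p₀, hp₀, hz⟩ := F.exists_zero t
  set g : ℝ → ℝ := fun x => 2 * (F.curv x t - F.curvAvg t) * pd F.curv x t with hg
  have hcg : Continuous g := by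
    exact (continuous_const.mul (F.cont_f t)).mul
      (continuous_slice1 (contDiff_pd F.smooth_curv) t)
  have hderiv : ∀ x ∈ Set.uIcc p₀ P,
      HasDerivAt (fun q => (F.curv q t - F.curvAvg t)^2) (g x) x := by
    intro x _
    have h1 : HasDerivAt (fun q => F.curv q t - F.curvAvg t) (pd F.curv x t) x :=
      (hasDerivAt_pd F.smooth_curv x t).sub_const _
    have h2 := h1.pow 2
    refine h2.congr_deriv ?_
    rw [hg]
    push_cast
    ring
  have hint : IntervalIntegrable g volume p₀ P := hcg.intervalIntegrable _ _
  have hftc := intervalIntegral.integral_eq_sub_of_hasDerivAt hderiv hint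
  have hM2 : (F.curv P t - F.curvAvg t)^2 = ∫ x in p₀..P, g x := by
    rw [hftc, hz]
    norm_num
  have habs : ∀ x, |g x| = 2 * (|F.curv x t - F.curvAvg t| * |F.st x t| * F.v x t) := by
    intro x
    rw [hg]
    simp only
    rw [F.pd_curv_eq, abs_mul, abs_mul, abs_mul,
      _root_.abs_of_nonneg (le_of_lt (F.v_pos (p := x) (t := t))),
      (by norm_num : |(2:ℝ)| = 2)]
    ring
  have hintabs : IntervalIntegrable (fun x => |g x|) volume F.pa F.pb :=
    hcg.abs.intervalIntegrable _ _
  have hO : ∫ x in p₀..P, g x ≤ ∫ x in F.pa..F.pb, |g x| := by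
    rcases le_total p₀ P with hle | hle
    · have s1 : ∫ x in p₀..P, g x ≤ ∫ x in p₀..P, |g x| :=
        intervalIntegral.integral_mono_on hle (hcg.intervalIntegrable _ _)
          (hcg.abs.intervalIntegrable _ _) (fun x _ => le_abs_self _)
      have s2 : ∫ x in p₀..P, |g x| ≤ ∫ x in F.pa..F.pb, |g x| :=
        intervalIntegral.integral_mono_interval hp₀.1 hle hP.2
          (MeasureTheory.ae_of_all _ fun x => abs_nonneg (g x)) hintabs
      linarith
    · have s0 : ∫ x in p₀..P, g x = -∫ x in P..p₀, g x :=
        intervalIntegral.integral_symm _ _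
      have s1 : -∫ x in P..p₀, g x = ∫ x in P..p₀, -g x :=
        (intervalIntegral.integral_neg).symm
      have s2 : ∫ x in P..p₀, -g x ≤ ∫ x in P..p₀, |g x| :=
        intervalIntegral.integral_mono_on hle ((hcg.neg).intervalIntegrable _ _)
          (hcg.abs.intervalIntegrable _ _) (fun x _ => neg_le_abs _)
      have s3 : ∫ x in P..p₀, |g x| ≤ ∫ x in F.pa..F.pb, |g x| :=
        intervalIntegral.integral_mono_interval hP.1 hle hp₀.2
          (MeasureTheory.ae_of_all _ fun x => abs_nonneg (g x)) hintabs
      linarith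
  have hval : ∫ x in F.pa..F.pb, |g x|
      = 2 * ∫ x in F.pa..F.pb, |F.curv x t - F.curvAvg t| * |F.st x t| * F.v x t := by
    rw [show (fun x => |g x|)
        = fun x => 2 * (|F.curv x t - F.curvAvg t| * |F.st x t| * F.v x t) from
      funext habs]
    exact intervalIntegral.integral_const_mul _ _
  have hCnn : 0 ≤ ∫ x in F.pa..F.pb, |F.curv x t - F.curvAvg t| * |F.st x t| * F.v x t := by
    apply intervalIntegral.integral_nonneg (le_of_lt F.hab)
    intro x _
    have := F.v_pos (p := x) (t := t)
    positivity
  have hCle : (∫ x in F.pa..F.pb, |F.curv x t - F.curvAvg t| * |F.st x t| * F.v x t)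
      ≤ Real.sqrt ((∫ p in F.pa..F.pb, (F.curv p t - F.curvAvg t)^2 * F.v p t)
          * (∫ p in F.pa..F.pb, (F.st p t)^2 * F.v p t)) := by
    have h2 := F.cs_bound t
    have hABnn : 0 ≤ (∫ p in F.pa..F.pb, (F.curv p t - F.curvAvg t)^2 * F.v p t)
        * (∫ p in F.pa..F.pb, (F.st p t)^2 * F.v p t) := le_trans (sq_nonneg _) h2
    exact (Real.le_sqrt hCnn hABnn).mpr h2
  linarith [hM2, hO, hval, hCle]

end APCSF
end SupBound

section YoungAux

lemma am_gm_aux {M2 A B : ℝ} (hA : 0 ≤ A) (hB : 0 ≤ B)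
    (hM2 : M2 ≤ 2 * Real.sqrt (A * B)) : M2 * A ≤ B + A^3 := by
  have h1 : Real.sqrt (A * B) = Real.sqrt A * Real.sqrt B := Real.sqrt_mul hA B
  have h2 := Real.sq_sqrt hA
  have h3 := Real.sq_sqrt hB
  have h4 := Real.sqrt_nonneg A
  have h5 := Real.sqrt_nonneg B
  have e1 : (Real.sqrt B - A*Real.sqrt A)^2
      = B + A^3 - 2*A*(Real.sqrt A*Real.sqrt B) := by
    linear_combination h3 + A^2 * h2
  have key : 2*(Real.sqrt A*Real.sqrt B)*A ≤ B + A^3 := by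
    nlinarith [sq_nonneg (Real.sqrt B - A*Real.sqrt A), e1]
  have e2 : 2*Real.sqrt (A*B)*A = 2*(Real.sqrt A*Real.sqrt B)*A := by rw [h1]
  nlinarith [key, e2, mul_le_mul_of_nonneg_right hM2 hA]

lemma young_aux {M A B c2 : ℝ} (hM : 0 ≤ M) (hA : 0 ≤ A) (hB : 0 ≤ B) (hc2 : 0 ≤ c2)
    (hM4 : M^2 ≤ 2 * Real.sqrt (A * B)) :
    3*c2*(M*A) ≤ B + ((3/4) * (3*c2)^((4:ℝ)/3) * 4^((1:ℝ)/3)) * A^((5:ℝ)/3) := by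
  rcases eq_or_lt_of_le hA with hA0 | hA0
  · have hsq : Real.sqrt (A * B) = 0 := by rw [← hA0]; simp
    have hM2 : M^2 ≤ 0 := by rw [hsq] at hM4; linarith
    have hM0 : M = 0 := by nlinarith [sq_nonneg M]
    rw [hM0, ← hA0, Real.zero_rpow (by norm_num : (5:ℝ)/3 ≠ 0)]
    simpa using hB
  · have hM4' : M^4 ≤ 4*(A*B) := by
      have h1 : (M^2)^2 ≤ (2*Real.sqrt (A*B))^2 :=
        pow_le_pow_left₀ (sq_nonneg M) hM4 2
      have h2 : Real.sqrt (A*B)^2 = A*B := Real.sq_sqrt (mul_nonneg hA hB)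
      calc M^4 = (M^2)^2 := by ring
      _ ≤ (2*Real.sqrt (A*B))^2 := h1
      _ = 4*(Real.sqrt (A*B)^2) := by ring
      _ = 4*(A*B) := by rw [h2]
    set base := (4*A)^((1:ℝ)/4) with hbase
    have hbpos : 0 < base := Real.rpow_pos_of_pos (by linarith) _
    have hb4 : base^(4:ℕ) = 4*A := by
      rw [hbase, ← Real.rpow_natCast ((4*A)^((1:ℝ)/4)) 4,
        ← Real.rpow_mul (by linarith : (0:ℝ) ≤ 4*A)]
      norm_num
    have hconj : ((4:ℝ)).HolderConjugate (4/3) :=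
      (Real.holderConjugate_iff_eq_conjExponent (by norm_num)).mpr (by norm_num)
    have hy := Real.young_inequality (M / base) (3*c2*(A*base)) hconj
    have hab' : (M / base) * (3*c2*(A*base)) = 3*c2*(M*A) := by
      field_simp
    rw [hab'] at hy
    have ht1 : |M / base| ^ (4:ℝ) / 4 ≤ B := by
      rw [_root_.abs_of_nonneg (div_nonneg hM (le_of_lt hbpos)),
        show ((4:ℝ)) = ((4:ℕ):ℝ) from by norm_num, Real.rpow_natCast, div_pow, hb4,
        div_div, div_le_iff₀ (by positivity)]
      push_cast
      nlinarith [hM4']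
    have ht2 : |3*c2*(A*base)| ^ ((4:ℝ)/3) / (4/3)
        = (3/4) * (3*c2)^((4:ℝ)/3) * 4^((1:ℝ)/3) * A^((5:ℝ)/3) := by
      rw [_root_.abs_of_nonneg (by positivity),
        show (3*c2*(A*base)) = (3*c2)*(A*base) from by ring,
        Real.mul_rpow (by positivity) (by positivity),
        Real.mul_rpow (le_of_lt hA0) (le_of_lt hbpos)]
      have hbb : base^((4:ℝ)/3) = 4^((1:ℝ)/3) * A^((1:ℝ)/3) := by
        rw [hbase, ← Real.rpow_mul (by linarith : (0:ℝ) ≤ 4*A),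
          show ((1:ℝ)/4 * (4/3)) = (1:ℝ)/3 from by norm_num,
          Real.mul_rpow (by norm_num : (0:ℝ) ≤ 4) (le_of_lt hA0)]
      rw [hbb,
        show A^((4:ℝ)/3) * (4^((1:ℝ)/3) * A^((1:ℝ)/3))
          = 4^((1:ℝ)/3) * (A^((4:ℝ)/3) * A^((1:ℝ)/3)) from by ring,
        ← Real.rpow_add hA0,
        show ((4:ℝ)/3 + 1/3) = (5:ℝ)/3 from by norm_num]
      ring
    rw [ht2] at hy
    linarith [ht1]

end YoungAux

set_option maxHeartbeats 2000000 in
/-- Evolution of `∫(κ-κ̄)² ds`: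
`d/dt ∫(κ-κ̄)² ds = 2[(κ-κ̄)∂ₛκ]ₐᵇ - 2∫(∂ₛκ)² ds + ∫(κ-κ̄)⁴ ds + 3κ̄∫(κ-κ̄)³ ds + 2κ̄²∫(κ-κ̄)² ds`,
the boundary term equals `-2(κ(b)-κ̄)²Σκ(c(b)) - 2(κ(a)-κ̄)²Σκ(c(a)) ≤ 0` since `Σκ ≥ 0`, and,
if moreover `|κ̄| ≤ c₂` uniformly, there are constants `C₁, C₂, C₃` with
`d/dt ∫(κ-κ̄)² ds ≤ C₁(∫(κ-κ̄)²ds)³ + C₂(∫(κ-κ̄)²ds)^{5/3} + C₃∫(κ-κ̄)²ds`. -/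
theorem evolution_of_curvature_energy (F : APCSF) (S : SupportCurve) (hbc : F.NeumannBC S)
    (c2 : ℝ) (hc2 : ∀ t ∈ Set.Ico (0:ℝ) F.T, |F.curvAvg t| ≤ c2) :
    (∀ t ∈ Set.Ioo (0:ℝ) F.T,
      HasDerivAt (fun s => ∫ p in F.pa..F.pb, (F.curv p s - F.curvAvg s)^2 * ‖pderiv F.c p s‖)
        (2 * ((F.curv F.pb t - F.curvAvg t) * sderivS F.c F.curv F.pb t
              - (F.curv F.pa t - F.curvAvg t) * sderivS F.c F.curv F.pa t)
          - 2 * (∫ p in F.pa..F.pb, (sderivS F.c F.curv p t)^2 * ‖pderiv F.c p t‖)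
          + (∫ p in F.pa..F.pb, (F.curv p t - F.curvAvg t)^4 * ‖pderiv F.c p t‖)
          + 3 * F.curvAvg t
              * (∫ p in F.pa..F.pb, (F.curv p t - F.curvAvg t)^3 * ‖pderiv F.c p t‖)
          + 2 * (F.curvAvg t)^2
              * (∫ p in F.pa..F.pb, (F.curv p t - F.curvAvg t)^2 * ‖pderiv F.c p t‖)) t) ∧
    (∀ t ∈ Set.Ioo (0:ℝ) F.T, ∀ u v, S.sf u = F.c F.pa t → S.sf v = F.c F.pb t →
      2 * ((F.curv F.pb t - F.curvAvg t) * sderivS F.c F.curv F.pb t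
            - (F.curv F.pa t - F.curvAvg t) * sderivS F.c F.curv F.pa t)
          = -2 * (F.curv F.pb t - F.curvAvg t)^2 * S.sk v
            - 2 * (F.curv F.pa t - F.curvAvg t)^2 * S.sk u ∧
      2 * ((F.curv F.pb t - F.curvAvg t) * sderivS F.c F.curv F.pb t
            - (F.curv F.pa t - F.curvAvg t) * sderivS F.c F.curv F.pa t) ≤ 0) ∧
    (∃ C1 C2 C3 : ℝ, ∀ t ∈ Set.Ioo (0:ℝ) F.T,
      deriv (fun s => ∫ p in F.pa..F.pb, (F.curv p s - F.curvAvg s)^2 * ‖pderiv F.c p s‖) t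
        ≤ C1 * (∫ p in F.pa..F.pb, (F.curv p t - F.curvAvg t)^2 * ‖pderiv F.c p t‖)^3
          + C2 * (∫ p in F.pa..F.pb, (F.curv p t - F.curvAvg t)^2 * ‖pderiv F.c p t‖)
              ^ ((5:ℝ)/3)
          + C3 * (∫ p in F.pa..F.pb, (F.curv p t - F.curvAvg t)^2 * ‖pderiv F.c p t‖)) := by
  refine ⟨?_, ?_, ?_⟩
  · intro t ht
    exact F.main_hasDerivAt ⟨le_of_lt ht.1, ht.2⟩
  · intro t ht u v hu hv
    have ha := F.boundary_st_a S hbc ht hu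
    have hb := F.boundary_st_b S hbc ht hv
    constructor
    · show 2 * ((F.curv F.pb t - F.curvAvg t) * F.st F.pb t
            - (F.curv F.pa t - F.curvAvg t) * F.st F.pa t) = _
      rw [ha, hb]
      ring
    · show 2 * ((F.curv F.pb t - F.curvAvg t) * F.st F.pb t
            - (F.curv F.pa t - F.curvAvg t) * F.st F.pa t) ≤ 0
      rw [ha, hb]
      nlinarith [S.hconvex u, S.hconvex v, sq_nonneg (F.curv F.pb t - F.curvAvg t),
        sq_nonneg (F.curv F.pa t - F.curvAvg t)]
  · refine ⟨1, (3/4) * (3*c2)^((4:ℝ)/3) * 4^((1:ℝ)/3), 2*c2^2, ?_⟩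
    intro t ht
    have htI : t ∈ Set.Ico 0 F.T := ⟨le_of_lt ht.1, ht.2⟩
    have hD := F.main_hasDerivAt htI
    show deriv (fun s => ∫ p in F.pa..F.pb, (F.curv p s - F.curvAvg s)^2 * F.v p s) t
      ≤ 1 * (∫ p in F.pa..F.pb, (F.curv p t - F.curvAvg t)^2 * F.v p t)^3
        + ((3/4) * (3*c2)^((4:ℝ)/3) * 4^((1:ℝ)/3))
          * (∫ p in F.pa..F.pb, (F.curv p t - F.curvAvg t)^2 * F.v p t)^((5:ℝ)/3)
        + (2*c2^2) * (∫ p in F.pa..F.pb, (F.curv p t - F.curvAvg t)^2 * F.v p t)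
    rw [hD.deriv]
    set A := ∫ p in F.pa..F.pb, (F.curv p t - F.curvAvg t)^2 * F.v p t with hA
    set B := ∫ p in F.pa..F.pb, (F.st p t)^2 * F.v p t with hB
    set I4 := ∫ p in F.pa..F.pb, (F.curv p t - F.curvAvg t)^4 * F.v p t with hI4
    set I3 := ∫ p in F.pa..F.pb, (F.curv p t - F.curvAvg t)^3 * F.v p t with hI3
    have cf : Continuous fun p => F.curv p t - F.curvAvg t := F.cont_f t
    have cv : Continuous fun p => F.v p t := continuous_slice1 F.smooth_v t
    have cst : Continuous fun p => F.st p t := continuous_slice1 F.smooth_st t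
    have hvp : ∀ p, 0 < F.v p t := fun p => F.v_pos
    have hA0 : 0 ≤ A := by
      rw [hA]
      apply intervalIntegral.integral_nonneg (le_of_lt F.hab)
      intro p _
      have := hvp p
      positivity
    have hB0 : 0 ≤ B := by
      rw [hB]
      apply intervalIntegral.integral_nonneg (le_of_lt F.hab)
      intro p _
      have := hvp p
      positivity
    obtain ⟨hra, hrb⟩ := hbc.1 t htI
    obtain ⟨u, hu⟩ := hra
    obtain ⟨vb, hvb⟩ := hrb
    have ha := F.boundary_st_a S hbc ht hu
    have hb := F.boundary_st_b S hbc ht hvb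
    have hbdry : 2 * ((F.curv F.pb t - F.curvAvg t) * F.st F.pb t
        - (F.curv F.pa t - F.curvAvg t) * F.st F.pa t) ≤ 0 := by
      rw [ha, hb]
      nlinarith [S.hconvex u, S.hconvex vb, sq_nonneg (F.curv F.pb t - F.curvAvg t),
        sq_nonneg (F.curv F.pa t - F.curvAvg t)]
    obtain ⟨P, hPmem, hPmax⟩ := isCompact_Icc.exists_isMaxOn
      (Set.nonempty_Icc.mpr (le_of_lt F.hab))
      ((cf.pow 2).continuousOn)
    set M2 := (F.curv P t - F.curvAvg t)^2 with hM2d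
    have hM2nn : 0 ≤ M2 := sq_nonneg _
    have hfb : ∀ p ∈ Set.Icc F.pa F.pb, (F.curv p t - F.curvAvg t)^2 ≤ M2 := by
      intro p hp
      simpa using hPmax hp
    set M := Real.sqrt M2 with hMd
    have hMnn : 0 ≤ M := Real.sqrt_nonneg _
    have hMsq : M^2 = M2 := Real.sq_sqrt hM2nn
    have hI4le : I4 ≤ M2 * A := by
      rw [hI4, hA, ← intervalIntegral.integral_const_mul]
      apply intervalIntegral.integral_mono_on (le_of_lt F.hab)
      · exact ((cf.pow 4).mul cv).intervalIntegrable _ _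
      · exact (continuous_const.mul ((cf.pow 2).mul cv)).intervalIntegrable _ _
      · intro p hp
        have h1 := hfb p hp
        have h2 := hvp p
        nlinarith [mul_nonneg (mul_nonneg (sub_nonneg.mpr h1)
          (sq_nonneg (F.curv p t - F.curvAvg t))) h2.le]
    have hI3le : I3 ≤ M * A := by
      rw [hI3, hA, ← intervalIntegral.integral_const_mul]
      apply intervalIntegral.integral_mono_on (le_of_lt F.hab)
      · exact ((cf.pow 3).mul cv).intervalIntegrable _ _
      · exact (continuous_const.mul ((cf.pow 2).mul cv)).intervalIntegrable _ _
      · intro p hp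
        have h1 := hfb p hp
        have h2 := hvp p
        have hfM : F.curv p t - F.curvAvg t ≤ M := by nlinarith [hMsq, hMnn]
        nlinarith [mul_nonneg (mul_nonneg (sub_nonneg.mpr hfM)
          (sq_nonneg (F.curv p t - F.curvAvg t))) h2.le]
    have hI3ge : -(M * A) ≤ I3 := by
      rw [hI3, hA]
      rw [show -(M * (∫ p in F.pa..F.pb, (F.curv p t - F.curvAvg t)^2 * F.v p t))
          = ∫ p in F.pa..F.pb, (-M) * ((F.curv p t - F.curvAvg t)^2 * F.v p t) from by
        rw [intervalIntegral.integral_const_mul]; ring]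
      apply intervalIntegral.integral_mono_on (le_of_lt F.hab)
      · exact (continuous_const.mul ((cf.pow 2).mul cv)).intervalIntegrable _ _
      · exact ((cf.pow 3).mul cv).intervalIntegrable _ _
      · intro p hp
        have h1 := hfb p hp
        have h2 := hvp p
        have hfM : -M ≤ F.curv p t - F.curvAvg t := by nlinarith [hMsq, hMnn]
        nlinarith [mul_nonneg (mul_nonneg
          (by linarith [hfM] : (0:ℝ) ≤ F.curv p t - F.curvAvg t + M)
          (sq_nonneg (F.curv p t - F.curvAvg t))) h2.le]
    have hM2le : M2 ≤ 2 * Real.sqrt (A*B) := by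
      rw [hM2d, hA, hB]
      exact F.pointval_bound t hPmem
    have hs1 : M2 * A ≤ B + A^3 := am_gm_aux hA0 hB0 hM2le
    have hk := hc2 t htI
    have hc2nn : 0 ≤ c2 := le_trans (abs_nonneg _) hk
    have hs2 : 3*c2*(M*A) ≤ B + ((3/4) * (3*c2)^((4:ℝ)/3) * 4^((1:ℝ)/3)) * A^((5:ℝ)/3) :=
      young_aux hMnn hA0 hB0 hc2nn (by rw [hMsq]; exact hM2le)
    have habs' := abs_le.mp hk
    have hMA : 0 ≤ M*A := mul_nonneg hMnn hA0
    have h3k : 3 * F.curvAvg t * I3 ≤ 3*c2*(M*A) := by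
      nlinarith [mul_nonneg (by linarith [habs'.2] : (0:ℝ) ≤ c2 - F.curvAvg t)
          (by linarith [hI3le] : (0:ℝ) ≤ M*A - I3),
        mul_nonneg (by linarith [habs'.1] : (0:ℝ) ≤ c2 + F.curvAvg t)
          (by linarith [hI3ge] : (0:ℝ) ≤ M*A + I3)]
    have h2k : 2 * (F.curvAvg t)^2 * A ≤ 2*c2^2 * A := by
      have hkk : (F.curvAvg t)^2 ≤ c2^2 := by nlinarith [habs'.1, habs'.2]
      nlinarith [hA0]
    linarith [hbdry, hI4le, hs1, hs2, h3k, h2k]
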